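/- arXiv:1612.03443 — 4 statements merged into one kernel-verified Lean document; each statement's English description precedes it below -/
import Mathlib

section
/- For any sequence (f_j)_{j≥1} in S there exist f ∈ S and a subsequence (f_{j_k})_{k≥1} such that d(f_{j_k}, f) → 0 as k → ∞; that is, the pseudometric space (S, d) is sequentially compact. -/
open Filter MeasureTheory
open scoped BigOperators Topology ENNReal Classical

namespace DirectedPolymers

/-- The disjoint union of countably many copies of `ℤ^d`. -/
abbrev Site (d : ℕ) := ℕ × (Fin d → ℤ)

/-- `‖u - v‖₁`: the `ℓ¹` distance within a common copy of `ℤ^d`, and `∞` across copies. -/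
noncomputable def dist1 {d : ℕ} (u v : Site d) : ENat :=
  if u.1 = v.1 then ((∑ i, (u.2 i - v.2 i).natAbs : ℕ) : ENat) else ⊤

/-- `u' - v' = u - v` in `ℤ^d ∪ {∞}`: either both differences are taken in the same copy
of `ℤ^d` and agree, or both are `∞`. -/
def sameDiff {d : ℕ} (u' v' u v : Site d) : Prop :=
  (u'.1 = v'.1 ∧ u.1 = v.1 ∧ u'.2 - v'.2 = u.2 - v.2) ∨ (u'.1 ≠ v'.1 ∧ u.1 ≠ v.1)

/-- `φ` is an isometry of degree `m` on `A`:
`φ(u) - φ(v) = u - v` whenever `‖u-v‖₁ < m` or `‖φ(u)-φ(v)‖₁ < m`. -/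
def IsIsoDeg {d : ℕ} (A : Set (Site d)) (φ : Site d → Site d) (m : ENat) : Prop :=
  ∀ u ∈ A, ∀ v ∈ A, (dist1 u v < m ∨ dist1 (φ u) (φ v) < m) → sameDiff (φ u) (φ v) u v

/-- `2^{-m}`, with value `0` at `m = ∞`. -/
noncomputable def twoPowNeg (m : ENat) : ℝ :=
  if m = ⊤ then 0 else (2 : ℝ) ^ (-(m.toNat : ℤ))

/-- The quantity `d_φ(f,g)` associated to an isometry `φ` with finite domain `A` and
degree (at least) `m`. -/
noncomputable def dPhi {d : ℕ} (A : Finset (Site d)) (φ : Site d → Site d) (m : ENat)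
    (f g : Site d → ℝ) : ℝ :=
  2 * ∑ u ∈ A, |f u - g (φ u)|
    + (∑' u : {u : Site d // u ∉ A}, (f u.1) ^ 2)
    + (∑' u : {u : Site d // u ∉ A.image φ}, (g u.1) ^ 2)
    + twoPowNeg m

/-- `d(f,g)`: the infimum of `d_φ(f,g)` over all isometries `φ` with finite domain. -/
noncomputable def pdist {d : ℕ} (f g : Site d → ℝ) : ℝ :=
  sInf { r : ℝ | ∃ (A : Finset (Site d)) (φ : Site d → Site d) (m : ENat),
    1 ≤ m ∧ IsIsoDeg (A : Set (Site d)) φ m ∧ r = dPhi A φ m f g }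

/-- Membership in `S`: nonnegative subprobability mass functions on `ℕ × ℤ^d`. -/
def memS {d : ℕ} (f : Site d → ℝ) : Prop :=
  (∀ u, 0 ≤ f u) ∧ Summable f ∧ (∑' u, f u) ≤ 1


section Greedy
variable {d : ℕ}

lemma exists_max_off (f : Site d → ℝ) (hpos : ∀ u, 0 ≤ f u) (hsum : Summable f)
    (B : Finset (Site d)) : ∃ u, u ∉ B ∧ ∀ v, v ∉ B → f v ≤ f u := by
  by_cases h : ∃ u₀, u₀ ∉ B ∧ 0 < f u₀
  · obtain ⟨u₀, hu₀B, hu₀⟩ := h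
    have hcof : {u : Site d | ¬ f u < f u₀}.Finite := by
      have h2 : ∀ᶠ u in cofinite, f u < f u₀ :=
        hsum.tendsto_cofinite_zero (Iio_mem_nhds hu₀)
      simpa [Filter.eventually_cofinite] using h2
    set T : Finset (Site d) := hcof.toFinset \ B with hT
    have hu₀T : u₀ ∈ T := by
      simp [hT, Set.Finite.mem_toFinset, hu₀B]
    obtain ⟨x, hxT, hxmax⟩ := T.exists_max_image f ⟨u₀, hu₀T⟩
    refine ⟨x, ?_, ?_⟩
    · simp only [hT, Finset.mem_sdiff] at hxT; exact hxT.2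
    · intro v hvB
      by_cases hv : f v < f u₀
      · have : f u₀ ≤ f x := hxmax u₀ hu₀T
        linarith
      · refine hxmax v ?_
        rw [hT, Finset.mem_sdiff, Set.Finite.mem_toFinset]
        exact ⟨hv, hvB⟩
  · push_neg at h
    obtain ⟨u, huB⟩ := B.exists_notMem
    refine ⟨u, huB, fun v hv => ?_⟩
    calc f v ≤ 0 := h v hv
    _ ≤ f u := hpos u

variable (f : Site d → ℝ) (hpos : ∀ u, 0 ≤ f u) (hsum : Summable f)

noncomputable def pick (B : Finset (Site d)) : Site d :=
  (exists_max_off f hpos hsum B).choose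

lemma pick_not_mem (B : Finset (Site d)) : pick f hpos hsum B ∉ B :=
  (exists_max_off f hpos hsum B).choose_spec.1

lemma pick_max (B : Finset (Site d)) : ∀ v, v ∉ B → f v ≤ f (pick f hpos hsum B) :=
  (exists_max_off f hpos hsum B).choose_spec.2

noncomputable def FB : ℕ → Finset (Site d)
  | 0 => ∅
  | n + 1 => insert (pick f hpos hsum (FB n)) (FB n)

noncomputable def gr (n : ℕ) : Site d := pick f hpos hsum (FB f hpos hsum n)

lemma FB_succ (n : ℕ) :
    FB f hpos hsum (n + 1) = insert (gr f hpos hsum n) (FB f hpos hsum n) := rfl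

lemma gr_not_mem (n : ℕ) : gr f hpos hsum n ∉ FB f hpos hsum n :=
  pick_not_mem f hpos hsum _

lemma gr_max (n : ℕ) : ∀ v, v ∉ FB f hpos hsum n → f v ≤ f (gr f hpos hsum n) :=
  pick_max f hpos hsum _

lemma FB_mono : Monotone (FB f hpos hsum) := by
  apply monotone_nat_of_le_succ
  intro n
  rw [FB_succ]
  exact Finset.subset_insert _ _

lemma gr_mem_FB {m n : ℕ} (h : m < n) : gr f hpos hsum m ∈ FB f hpos hsum n := by
  have : gr f hpos hsum m ∈ FB f hpos hsum (m + 1) := by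
    rw [FB_succ]; exact Finset.mem_insert_self _ _
  exact FB_mono f hpos hsum h this

lemma gr_inj : Function.Injective (gr f hpos hsum) := by
  intro m n hmn
  by_contra hne
  rcases lt_or_gt_of_ne hne with h | h
  · exact gr_not_mem f hpos hsum n (hmn ▸ gr_mem_FB f hpos hsum h)
  · exact gr_not_mem f hpos hsum m (hmn ▸ gr_mem_FB f hpos hsum h)

lemma FB_eq_image (n : ℕ) :
    FB f hpos hsum n = (Finset.range n).image (gr f hpos hsum) := by
  induction n with
  | zero => simp [FB]
  | succ n ih => rw [FB_succ, ih, Finset.range_add_one, Finset.image_insert]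

lemma gr_anti : Antitone (fun n => f (gr f hpos hsum n)) := by
  apply antitone_nat_of_succ_le
  intro n
  apply gr_max
  intro hmem
  exact gr_not_mem f hpos hsum (n+1) (FB_mono f hpos hsum (Nat.le_succ n) hmem)

lemma not_mem_FB_le {u : Site d} {n : ℕ} (h : u ∉ FB f hpos hsum (n + 1)) :
    f u ≤ f (gr f hpos hsum n) := by
  apply gr_max
  intro hmem
  exact h (FB_mono f hpos hsum (Nat.le_succ n) hmem)

lemma gr_cover {u : Site d} (h : u ∉ Set.range (gr f hpos hsum)) : f u = 0 := by
  by_contra hne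
  have hupos : 0 < f u := lt_of_le_of_ne (hpos u) (Ne.symm hne)
  have hall : ∀ n, f u ≤ f (gr f hpos hsum n) := by
    intro n
    apply gr_max
    intro hmem
    rw [FB_eq_image] at hmem
    obtain ⟨i, _, hi⟩ := Finset.mem_image.1 hmem
    exact h ⟨i, hi⟩
  have hfin : {v : Site d | ¬ f v < f u}.Finite := by
    have h2 : ∀ᶠ v in cofinite, f v < f u :=
      hsum.tendsto_cofinite_zero (Iio_mem_nhds hupos)
    simpa [Filter.eventually_cofinite] using h2
  have hsub : Set.range (gr f hpos hsum) ⊆ {v : Site d | ¬ f v < f u} := by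
    rintro _ ⟨n, rfl⟩
    exact not_lt.2 (hall n)
  exact Set.infinite_range_of_injective (gr_inj f hpos hsum) (hfin.subset hsub)

lemma sum_range_gr_le (hle : ∑' u, f u ≤ 1) (n : ℕ) :
    ∑ i ∈ Finset.range n, f (gr f hpos hsum i) ≤ 1 := by
  rw [← Finset.sum_image (fun a _ b _ h => gr_inj f hpos hsum h), ← FB_eq_image]
  exact le_trans (Summable.sum_le_tsum _ (fun u _ => hpos u) hsum) hle

lemma gr_val_le (hle : ∑' u, f u ≤ 1) (n : ℕ) :
    f (gr f hpos hsum n) ≤ 1 / (n + 1) := by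
  have h1 : (n + 1 : ℝ) * f (gr f hpos hsum n) ≤ ∑ i ∈ Finset.range (n+1), f (gr f hpos hsum i) := by
    calc (n + 1 : ℝ) * f (gr f hpos hsum n)
        = ∑ _i ∈ Finset.range (n+1), f (gr f hpos hsum n) := by
          rw [Finset.sum_const, Finset.card_range, nsmul_eq_mul]; push_cast; ring
      _ ≤ _ := Finset.sum_le_sum (fun i hi =>
          gr_anti f hpos hsum (Nat.lt_succ_iff.1 (Finset.mem_range.1 hi)))
  have h2 := le_trans h1 (sum_range_gr_le f hpos hsum hle (n+1))
  rw [le_div_iff₀ (by positivity)]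
  linarith

end Greedy

section PdistBasic
variable {d : ℕ}

lemma twoPowNeg_nonneg (m : ENat) : 0 ≤ twoPowNeg m := by
  unfold twoPowNeg
  split <;> positivity

lemma dPhi_nonneg (A : Finset (Site d)) (φ : Site d → Site d) (m : ENat)
    (f g : Site d → ℝ) : 0 ≤ dPhi A φ m f g := by
  unfold dPhi
  have h1 : (0:ℝ) ≤ ∑ u ∈ A, |f u - g (φ u)| :=
    Finset.sum_nonneg fun u _ => abs_nonneg _
  have h2 : (0:ℝ) ≤ ∑' u : {u : Site d // u ∉ A}, (f u.1) ^ 2 :=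
    tsum_nonneg fun u => sq_nonneg _
  have h3 : (0:ℝ) ≤ ∑' u : {u : Site d // u ∉ A.image φ}, (g u.1) ^ 2 :=
    tsum_nonneg fun u => sq_nonneg _
  have h4 := twoPowNeg_nonneg m
  linarith

lemma pdist_nonneg (f g : Site d → ℝ) : 0 ≤ pdist f g := by
  apply Real.sInf_nonneg
  rintro r ⟨A, φ, m, -, -, rfl⟩
  exact dPhi_nonneg A φ m f g

lemma pdist_le (f g : Site d → ℝ) (A : Finset (Site d)) (φ : Site d → Site d)
    (m : ENat) (h1 : 1 ≤ m) (h2 : IsIsoDeg (A : Set (Site d)) φ m) :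
    pdist f g ≤ dPhi A φ m f g := by
  apply csInf_le
  · exact ⟨0, fun r ⟨A', φ', m', _, _, hr⟩ => hr ▸ dPhi_nonneg A' φ' m' f g⟩
  · exact ⟨A, φ, m, h1, h2, rfl⟩

lemma twoPowNeg_coe (m : ℕ) : twoPowNeg (m : ENat) = (2:ℝ) ^ (-(m:ℤ)) := by
  unfold twoPowNeg
  rw [if_neg (by simp), ENat.toNat_coe]

lemma tsum_sq_subtype_le {α : Type*} (h : α → ℝ) (s : Set α) (c : ℝ) (hc : 0 ≤ c)
    (hpos : ∀ u, 0 ≤ h u) (hsum : Summable h) (htsum : ∑' u, h u ≤ 1)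
    (hb : ∀ u ∈ s, h u ≤ c) : (∑' u : s, (h u.1) ^ 2) ≤ c := by
  have hmul : Summable (fun u : s => c * h u.1) := (hsum.mul_left c).subtype s
  have h2sum : Summable (fun u : s => (h u.1) ^ 2) := by
    refine Summable.of_nonneg_of_le (fun u => sq_nonneg _) (fun u => ?_) hmul
    have h1 := hpos u.1
    have h2 := hb u.1 u.2
    nlinarith
  calc (∑' u : s, (h u.1) ^ 2) ≤ ∑' u : s, c * h u.1 := by
        refine Summable.tsum_le_tsum (fun u => ?_) h2sum hmul
        have h1 := hpos u.1
        have h2 := hb u.1 u.2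
        nlinarith
    _ = c * ∑' u : s, h u.1 := tsum_mul_left
    _ ≤ c * 1 := by
        refine mul_le_mul_of_nonneg_left ?_ hc
        refine le_trans ?_ htsum
        rw [tsum_subtype]
        exact Summable.tsum_le_tsum (fun u => Set.indicator_le_self' (fun x _ => hpos x) u)
          (hsum.indicator s) hsum
    _ = c := mul_one c

end PdistBasic

/-- The pseudometric space `(S, d)` is sequentially compact: every sequence
in `S` has a subsequence converging (in the pseudometric `d`) to some element of `S`. -/
theorem sequentially_compact {d : ℕ} (hd : 1 ≤ d)
    (f : ℕ → Site d → ℝ) (hf : ∀ j, memS (f j)) :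
    ∃ g : Site d → ℝ, memS g ∧ ∃ j : ℕ → ℕ, StrictMono j ∧
      Tendsto (fun k => pdist (f (j k)) g) atTop (nhds 0) := by
  classical
  -- the greedy enumeration of each f j
  set σ : ℕ → ℕ → Site d := fun j => gr (f j) (hf j).1 (hf j).2.1 with hσdef
  have hf1 : ∀ j u, f j u ≤ 1 := fun j u =>
    le_trans (Summable.le_tsum (hf j).2.1 u fun _ _ => (hf j).1 _) (hf j).2.2
  -- the compact product carrying all relevant data
  set x : ℕ → (ℕ ⊕ ℕ × ℕ × (Fin d → ℤ)) → Set.Icc (0:ℝ) 1 := fun j c =>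
    Sum.casesOn c
      (fun i => ⟨f j (σ j i), (hf j).1 _, hf1 j _⟩)
      (fun p => ⟨if (σ j p.1).1 = (σ j p.2.1).1 ∧ (σ j p.1).2 - (σ j p.2.1).2 = p.2.2
        then 1 else 0, by split <;> norm_num⟩) with hxdef
  obtain ⟨L, jj, hjmono, hjL⟩ := SeqCompactSpace.tendsto_subseq x
  have hcomp : ∀ c, Tendsto (fun k => (x (jj k) c : ℝ)) atTop (nhds (L c : ℝ)) := by
    intro c
    exact (continuous_subtype_val.tendsto _).comp ((tendsto_pi_nhds.1 hjL) c)
  -- convergence of sizes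
  have ha : ∀ i, Tendsto (fun k => f (jj k) (σ (jj k) i)) atTop (nhds (L (.inl i) : ℝ)) :=
    fun i => hcomp (.inl i)
  -- the indicator limits
  set indL : ℕ → ℕ → (Fin d → ℤ) → ℝ := fun i i' z => (L (.inr (i, i', z)) : ℝ) with hindLdef
  have hind : ∀ i i' z, Tendsto (fun k => ((if (σ (jj k) i).1 = (σ (jj k) i').1 ∧
      (σ (jj k) i).2 - (σ (jj k) i').2 = z then (1:ℝ) else 0))) atTop (nhds (indL i i' z)) :=
    fun i i' z => hcomp (.inr (i, i', z))
  have hind01 : ∀ i i' z, indL i i' z = 0 ∨ indL i i' z = 1 := by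
    intro i i' z
    have hmem : indL i i' z ∈ ({0, 1} : Set ℝ) := by
      apply (IsClosed.mem_of_tendsto (((Set.finite_singleton (1:ℝ)).insert 0).isClosed) (hind i i' z))
      filter_upwards with k
      split <;> simp
    simpa using hmem
  -- eventual identities from indicator limits
  have hev1 : ∀ i i' z, indL i i' z = 1 → ∀ᶠ k in atTop,
      (σ (jj k) i).1 = (σ (jj k) i').1 ∧ (σ (jj k) i).2 - (σ (jj k) i').2 = z := by
    intro i i' z h1
    have := (hind i i' z).eventually (eventually_gt_nhds (by rw [h1]; norm_num : (1/2:ℝ) < indL i i' z))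
    filter_upwards [this] with k hk
    by_contra hcon
    rw [if_neg hcon] at hk
    norm_num at hk
  have hev0 : ∀ i i' z, indL i i' z ≠ 1 → ∀ᶠ k in atTop,
      ¬((σ (jj k) i).1 = (σ (jj k) i').1 ∧ (σ (jj k) i).2 - (σ (jj k) i').2 = z) := by
    intro i i' z h1
    have h0 : indL i i' z = 0 := (hind01 i i' z).resolve_right h1
    have := (hind i i' z).eventually (eventually_lt_nhds (by rw [h0]; norm_num : indL i i' z < 1/2))
    filter_upwards [this] with k hk
    intro hcon
    rw [if_pos hcon] at hk
    norm_num at hk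
  have hlim1 : ∀ i i' z, (∀ᶠ k in atTop, (σ (jj k) i).1 = (σ (jj k) i').1 ∧
      (σ (jj k) i).2 - (σ (jj k) i').2 = z) → indL i i' z = 1 := by
    intro i i' z hev
    apply tendsto_nhds_unique (hind i i' z)
    apply Tendsto.congr' _ tendsto_const_nhds
    filter_upwards [hev] with k hk
    rw [if_pos hk]
  -- the clustering relation
  set Rel : ℕ → ℕ → Prop := fun i i' => ∃ z, indL i i' z = 1 with hReldef
  have rel_refl : ∀ i, Rel i i := by
    intro i
    exact ⟨0, hlim1 i i 0 (by filter_upwards with k; simp)⟩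
  have rel_symm : ∀ {i i'}, Rel i i' → Rel i' i := by
    rintro i i' ⟨z, hz⟩
    refine ⟨-z, hlim1 _ _ _ ?_⟩
    filter_upwards [hev1 i i' z hz] with k hk
    refine ⟨hk.1.symm, ?_⟩
    rw [← hk.2]; abel
  have rel_trans : ∀ {i i' i''}, Rel i i' → Rel i' i'' → Rel i i'' := by
    rintro i i' i'' ⟨z, hz⟩ ⟨z', hz'⟩
    refine ⟨z + z', hlim1 _ _ _ ?_⟩
    filter_upwards [hev1 i i' z hz, hev1 i' i'' z' hz'] with k hk hk'
    refine ⟨hk.1.trans hk'.1, ?_⟩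
    rw [← hk.2, ← hk'.2]; abel
  -- least representative of each cluster
  have hex : ∀ i, ∃ n, Rel n i := fun i => ⟨i, rel_refl i⟩
  set r : ℕ → ℕ := fun i => Nat.find (hex i) with hrdef
  have hrrel : ∀ i, Rel (r i) i := fun i => Nat.find_spec (hex i)
  have hr_eq : ∀ {i i'}, Rel i i' → r i = r i' := by
    intro i i' h
    apply le_antisymm
    · exact Nat.find_min' (hex i) (rel_trans (hrrel i') (rel_symm h))
    · exact Nat.find_min' (hex i') (rel_trans (hrrel i) h)
  have hr_rel_of_eq : ∀ {i i'}, r i = r i' → Rel i i' := by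
    intro i i' h
    exact rel_trans (rel_symm (hrrel i)) (h ▸ hrrel i')
  -- the displacement of i relative to its representative
  have hzeta_ex : ∀ i, ∃ z, indL i (r i) z = 1 := fun i => rel_symm (hrrel i)
  set zeta : ℕ → (Fin d → ℤ) := fun i => (hzeta_ex i).choose with hzetadef
  have hzeta : ∀ i, indL i (r i) (zeta i) = 1 := fun i => (hzeta_ex i).choose_spec
  -- the limit positions
  set p : ℕ → Site d := fun i => (r i, zeta i) with hpdef
  -- eventual relative positions for related indices
  have hrelpos : ∀ {i i'}, Rel i i' → ∀ᶠ k in atTop,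
      (σ (jj k) i).1 = (σ (jj k) i').1 ∧
      (σ (jj k) i).2 - (σ (jj k) i').2 = zeta i - zeta i' := by
    intro i i' h
    have h1 := hev1 i (r i) (zeta i) (hzeta i)
    have h2 := hev1 i' (r i') (zeta i') (hzeta i')
    have hr' : r i = r i' := hr_eq h
    filter_upwards [h1, h2] with k hk1 hk2
    rw [hr'] at hk1
    constructor
    · rw [hk1.1, hk2.1]
    · have := hk1.2
      have := hk2.2
      have : (σ (jj k) i).2 - (σ (jj k) i').2
          = ((σ (jj k) i).2 - (σ (jj k) (r i')).2) - ((σ (jj k) i').2 - (σ (jj k) (r i')).2) := by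
        abel
      rw [this, hk1.2, hk2.2]
  have hpinj : Function.Injective p := by
    intro i i' hpp
    by_contra hne
    have hr' : r i = r i' := congrArg Prod.fst hpp
    have hrel : Rel i i' := hr_rel_of_eq hr'
    have hzz : zeta i = zeta i' := congrArg Prod.snd hpp
    have hev := hrelpos hrel
    obtain ⟨k, hk⟩ := hev.exists
    have hdiff : (σ (jj k) i).2 - (σ (jj k) i').2 = 0 := by
      rw [hk.2, hzz]; abel
    have hσeq : σ (jj k) i = σ (jj k) i' := by
      have h2 : (σ (jj k) i).2 = (σ (jj k) i').2 := by
        have := sub_eq_zero.1 hdiff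
        exact this
      exact Prod.ext hk.1 h2
    exact hne (gr_inj (f (jj k)) (hf (jj k)).1 (hf (jj k)).2.1 hσeq)
  -- the limit masses
  set A : ℕ → ℝ := fun i => (L (.inl i) : ℝ) with hAdef
  have hApos : ∀ i, 0 ≤ A i := fun i => (L (.inl i)).2.1
  have hAanti : ∀ {i i'}, i ≤ i' → A i' ≤ A i := by
    intro i i' h
    refine le_of_tendsto_of_tendsto' (ha i') (ha i) fun k => ?_
    exact gr_anti (f (jj k)) (hf (jj k)).1 (hf (jj k)).2.1 h
  have hAsumle : ∀ F : Finset ℕ, ∑ i ∈ F, A i ≤ 1 := by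
    intro F
    have htend : Tendsto (fun k => ∑ i ∈ F, f (jj k) (σ (jj k) i)) atTop
        (nhds (∑ i ∈ F, A i)) := tendsto_finset_sum F (fun i _ => ha i)
    refine le_of_tendsto' htend fun k => ?_
    rw [← Finset.sum_image (fun a _ b _ h =>
      gr_inj (f (jj k)) (hf (jj k)).1 (hf (jj k)).2.1 h)]
    exact le_trans (Summable.sum_le_tsum _ (fun u _ => (hf (jj k)).1 u) (hf (jj k)).2.1)
      (hf (jj k)).2.2
  have hAsum : Summable A := summable_of_sum_le (fun i => hApos i) hAsumle
  have hAtsum : ∑' i, A i ≤ 1 := Summable.tsum_le_of_sum_le hAsum hAsumle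
  have hAle : ∀ n, A n ≤ 1 / (n + 1) := by
    intro n
    refine le_of_tendsto' (ha n) fun k => ?_
    exact gr_val_le (f (jj k)) (hf (jj k)).1 (hf (jj k)).2.1 (hf (jj k)).2.2 n
  -- the limit function
  set g : Site d → ℝ := Function.extend p A 0 with hgdef
  have hgp : ∀ i, g (p i) = A i := fun i => hpinj.extend_apply A 0 i
  have hg0 : ∀ u, u ∉ Set.range p → g u = 0 := by
    intro u hu
    rw [hgdef, Function.extend_apply' _ _ _ (fun ⟨i, hi⟩ => hu ⟨i, hi⟩)]
    rfl
  have hgpos : ∀ u, 0 ≤ g u := by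
    intro u
    by_cases hu : u ∈ Set.range p
    · obtain ⟨i, rfl⟩ := hu
      rw [hgp]
      exact hApos i
    · rw [hg0 u hu]
  have hgsum : Summable g := by
    rw [← Function.Injective.summable_iff hpinj hg0]
    refine hAsum.congr fun i => ?_
    exact (hgp i).symm
  have hgtsum : ∑' u, g u ≤ 1 := by
    have : ∑' u, g u = ∑' i, A i := by
      have hsupp : Function.support g ⊆ Set.range p := by
        intro u hu
        by_contra h
        exact hu (hg0 u h)
      rw [← Function.Injective.tsum_eq hpinj hsupp]
      exact tsum_congr fun i => hgp i
    rw [this]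
    exact hAtsum
  refine ⟨g, ⟨hgpos, hgsum, hgtsum⟩, jj, hjmono, ?_⟩
  -- the convergence
  rw [NormedAddCommGroup.tendsto_nhds_zero]
  intro ε hε
  obtain ⟨n, hn⟩ := exists_nat_one_div_lt (show (0:ℝ) < ε/8 by linarith)
  set N : ℕ := n + 1 with hNdef
  set c : ℝ := 1 / ((n:ℝ) + 1) with hcdef
  have hc0 : 0 ≤ c := by positivity
  obtain ⟨m0, hm0⟩ := exists_pow_lt_of_lt_one (show (0:ℝ) < ε/8 by linarith)
    (by norm_num : (1/2:ℝ) < 1)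
  set m : ℕ := m0 + 1 with hmdef
  have hmval : (2:ℝ) ^ (-(m:ℤ)) < ε/8 := by
    have h1 : (2:ℝ) ^ (-(m:ℤ)) = (1/2:ℝ) ^ m := by
      rw [zpow_neg, zpow_natCast, one_div, inv_pow]
    rw [h1]
    calc (1/2:ℝ) ^ m ≤ (1/2:ℝ) ^ m0 := by
          apply pow_le_pow_of_le_one (by norm_num) (by norm_num)
          omega
      _ < ε/8 := hm0
  -- eventual smallness of mass differences
  have hE1 : ∀ᶠ k in atTop,
      ∑ i ∈ Finset.range N, |f (jj k) (σ (jj k) i) - A i| < ε/8 := by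
    have h0 : ∀ i : ℕ, Tendsto (fun k => |f (jj k) (σ (jj k) i) - A i|) atTop (nhds 0) := by
      intro i
      have h1 : Tendsto (fun k => f (jj k) (σ (jj k) i) - A i) atTop (nhds (A i - A i)) :=
        (ha i).sub tendsto_const_nhds
      rw [sub_self] at h1
      simpa using h1.abs
    have htend : Tendsto (fun k => ∑ i ∈ Finset.range N, |f (jj k) (σ (jj k) i) - A i|)
        atTop (nhds 0) := by
      have h2 := tendsto_finset_sum (Finset.range N) (fun i (_ : i ∈ Finset.range N) => h0 i)
      simpa using h2
    exact htend.eventually (eventually_lt_nhds (by linarith))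
  -- eventual separation of unrelated indices
  have hfar : ∀ i i', ¬ Rel i i' → ∀ᶠ k in atTop,
      ¬ dist1 (σ (jj k) i) (σ (jj k) i') < ((m:ℕ) : ENat) := by
    intro i i' hnr
    set Z : Finset (Fin d → ℤ) := Fintype.piFinset (fun _ => Finset.Icc (-(m:ℤ)) m) with hZdef
    have hev : ∀ᶠ k in atTop, ∀ z ∈ Z,
        ¬((σ (jj k) i).1 = (σ (jj k) i').1 ∧ (σ (jj k) i).2 - (σ (jj k) i').2 = z) := by
      rw [eventually_all_finset]
      intro z _
      exact hev0 i i' z (fun h1 => hnr ⟨z, h1⟩)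
    filter_upwards [hev] with k hk hlt
    rw [dist1] at hlt
    by_cases hcc : (σ (jj k) i).1 = (σ (jj k) i').1
    · rw [if_pos hcc] at hlt
      have hnat : (∑ t, ((σ (jj k) i).2 t - (σ (jj k) i').2 t).natAbs) < m := by
        exact_mod_cast hlt
      have hzZ : (σ (jj k) i).2 - (σ (jj k) i').2 ∈ Z := by
        rw [hZdef, Fintype.mem_piFinset]
        intro t
        rw [Finset.mem_Icc]
        have h1 : ((σ (jj k) i).2 t - (σ (jj k) i').2 t).natAbs
            ≤ ∑ t', ((σ (jj k) i).2 t' - (σ (jj k) i').2 t').natAbs :=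
          Finset.single_le_sum (f := fun t' => ((σ (jj k) i).2 t' - (σ (jj k) i').2 t').natAbs)
            (fun _ _ => Nat.zero_le _) (Finset.mem_univ t)
        have h2 : ((σ (jj k) i).2 t - (σ (jj k) i').2 t).natAbs < m := lt_of_le_of_lt h1 hnat
        have h3 : |(σ (jj k) i).2 t - (σ (jj k) i').2 t| < (m:ℤ) := by
          rw [Int.abs_eq_natAbs]
          exact_mod_cast h2
        have h4 := abs_lt.1 h3
        have h5 : ((σ (jj k) i).2 - (σ (jj k) i').2) t = (σ (jj k) i).2 t - (σ (jj k) i').2 t :=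
          rfl
        rw [h5]
        constructor <;> linarith [h4.1, h4.2]
      exact hk _ hzZ ⟨hcc, rfl⟩
    · rw [if_neg hcc] at hlt
      exact not_top_lt hlt
  -- combine eventual behavior on all pairs below N
  have hEall : ∀ᶠ k in atTop, ∀ i ∈ Finset.range N, ∀ i' ∈ Finset.range N,
      (Rel i i' → ((σ (jj k) i).1 = (σ (jj k) i').1 ∧
        (σ (jj k) i).2 - (σ (jj k) i').2 = zeta i - zeta i'))
      ∧ (¬ Rel i i' → ¬ dist1 (σ (jj k) i) (σ (jj k) i') < ((m:ℕ):ENat)) := by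
    rw [eventually_all_finset]
    intro i _
    rw [eventually_all_finset]
    intro i' _
    by_cases hrel : Rel i i'
    · filter_upwards [hrelpos hrel] with k hk
      exact ⟨fun _ => hk, fun hcon => absurd hrel hcon⟩
    · filter_upwards [hfar i i' hrel] with k hk
      exact ⟨fun hcon => absurd hcon hrel, fun _ => hk⟩
  filter_upwards [hE1, hEall] with k hk1 hk2
  have hσinj : Function.Injective (σ (jj k)) := gr_inj (f (jj k)) (hf (jj k)).1 (hf (jj k)).2.1
  -- the finite matching
  set φ : Site d → Site d :=
    fun u => if h : ∃ i, i < N ∧ σ (jj k) i = u then p h.choose else u with hφdef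
  have hφσ : ∀ i, i < N → φ (σ (jj k) i) = p i := by
    intro i hi
    have hex2 : ∃ i', i' < N ∧ σ (jj k) i' = σ (jj k) i := ⟨i, hi, rfl⟩
    rw [hφdef]
    dsimp only
    rw [dif_pos hex2]
    congr 1
    exact hσinj hex2.choose_spec.2
  set Ak : Finset (Site d) := (Finset.range N).image (σ (jj k)) with hAkdef
  -- it is an isometry of degree m
  have hiso : IsIsoDeg (Ak : Set (Site d)) φ ((m:ℕ) : ENat) := by
    intro u hu v hv hlt
    rw [Finset.mem_coe, hAkdef, Finset.mem_image] at hu hv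
    obtain ⟨i, hi, rfl⟩ := hu
    obtain ⟨i', hi', rfl⟩ := hv
    rw [Finset.mem_range] at hi hi'
    by_cases hrel : Rel i i'
    · left
      have hpair := (hk2 i (Finset.mem_range.2 hi) i' (Finset.mem_range.2 hi')).1 hrel
      rw [hφσ i hi, hφσ i' hi']
      refine ⟨hr_eq hrel, hpair.1, ?_⟩
      show zeta i - zeta i' = _
      exact hpair.2.symm
    · exfalso
      rcases hlt with hlt | hlt
      · exact (hk2 i (Finset.mem_range.2 hi) i' (Finset.mem_range.2 hi')).2 hrel hlt
      · rw [hφσ i hi, hφσ i' hi'] at hlt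
        have hrne : r i ≠ r i' := fun h => hrel (hr_rel_of_eq h)
        rw [dist1, if_neg hrne] at hlt
        exact not_top_lt hlt
  have hone : (1 : ENat) ≤ ((m:ℕ) : ENat) := by
    exact_mod_cast Nat.le_add_left 1 m0
  have hble := pdist_le (f (jj k)) g Ak φ ((m:ℕ):ENat) hone hiso
  -- estimate the four terms of dPhi
  have hT1 : ∑ u ∈ Ak, |f (jj k) u - g (φ u)| = ∑ i ∈ Finset.range N, |f (jj k) (σ (jj k) i) - A i| := by
    rw [hAkdef, Finset.sum_image (fun a _ b _ h => hσinj h)]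
    refine Finset.sum_congr rfl fun i hi => ?_
    rw [hφσ i (Finset.mem_range.1 hi), hgp i]
  have hT2 : (∑' u : {u : Site d // u ∉ Ak}, (f (jj k) u.1) ^ 2) ≤ c := by
    refine tsum_sq_subtype_le (f (jj k)) {u : Site d | u ∉ Ak} c hc0 (hf (jj k)).1
      (hf (jj k)).2.1 (hf (jj k)).2.2 ?_
    intro u hu
    have hnm : u ∉ FB (f (jj k)) (hf (jj k)).1 (hf (jj k)).2.1 (n + 1) := by
      rw [FB_eq_image]
      exact hu
    refine le_trans (not_mem_FB_le _ _ _ hnm) ?_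
    exact gr_val_le (f (jj k)) (hf (jj k)).1 (hf (jj k)).2.1 (hf (jj k)).2.2 n
  have himg : Ak.image φ = (Finset.range N).image p := by
    rw [hAkdef, Finset.image_image]
    refine Finset.image_congr fun i hi => ?_
    rw [Finset.coe_range, Set.mem_Iio] at hi
    exact hφσ i hi
  have hT3 : (∑' u : {u : Site d // u ∉ Ak.image φ}, (g u.1) ^ 2) ≤ c := by
    refine tsum_sq_subtype_le g {u : Site d | u ∉ Ak.image φ} c hc0 hgpos hgsum hgtsum ?_
    intro u hu
    rw [Set.mem_setOf_eq, himg] at hu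
    by_cases hur : u ∈ Set.range p
    · obtain ⟨i, rfl⟩ := hur
      have hiN : ¬ i < N := by
        intro hiN
        exact hu (Finset.mem_image.2 ⟨i, Finset.mem_range.2 hiN, rfl⟩)
      rw [hgp i]
      refine le_trans (hAanti (show n ≤ i by omega)) (hAle n)
    · rw [hg0 u hur]
      exact hc0
  -- put everything together
  have htp : twoPowNeg ((m:ℕ):ENat) < ε/8 := by
    rw [twoPowNeg_coe]
    exact hmval
  have hcε : c < ε/8 := hn
  rw [Real.norm_eq_abs, abs_of_nonneg (pdist_nonneg _ _)]
  refine lt_of_le_of_lt hble ?_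
  rw [dPhi, hT1]
  have := hk1
  linarith


end DirectedPolymers
end

section
/- For all f, g, h ∈ S, d(f,h) ≤ d(f,g) + d(g,h); together with the symmetry d(f,g)=d(g,f), this makes d a pseudometric on S. -/
open Filter MeasureTheory
open scoped BigOperators Topology ENNReal Classical

namespace DirectedPolymers

section Aux

variable {d : ℕ}

lemma sameDiff_swap {a b c e : Site d} (h : sameDiff a b c e) : sameDiff c e a b := by
  rcases h with ⟨h1, h2, h3⟩ | ⟨h1, h2⟩
  · exact Or.inl ⟨h2, h1, h3.symm⟩
  · exact Or.inr ⟨h2, h1⟩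

lemma sameDiff_trans {a b c e p q : Site d} (h1 : sameDiff a b c e)
    (h2 : sameDiff c e p q) : sameDiff a b p q := by
  rcases h1 with ⟨h1a, h1b, h1c⟩ | ⟨h1a, h1b⟩ <;>
    rcases h2 with ⟨h2a, h2b, h2c⟩ | ⟨h2a, h2b⟩
  · exact Or.inl ⟨h1a, h2b, h1c.trans h2c⟩
  · exact absurd h1b h2a
  · exact absurd h2a h1b
  · exact Or.inr ⟨h1a, h2b⟩

lemma dist1_congr {a b c e : Site d} (h : sameDiff a b c e) : dist1 a b = dist1 c e := by
  rcases h with ⟨h1, h2, h3⟩ | ⟨h1, h2⟩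
  · have hsum : (∑ i, (a.2 i - b.2 i).natAbs) = ∑ i, (c.2 i - e.2 i).natAbs := by
      refine Finset.sum_congr rfl fun i _ => ?_
      have hi : a.2 i - b.2 i = c.2 i - e.2 i := by
        have := congrFun h3 i
        simpa [Pi.sub_apply] using this
      rw [hi]
    simp only [dist1, if_pos h1, if_pos h2, hsum]
  · simp only [dist1, if_neg h1, if_neg h2]

lemma dist1_self (u : Site d) : dist1 u u = 0 := by
  simp [dist1]

lemma iso_inj {A : Finset (Site d)} {φ : Site d → Site d} {m : ENat}
    (hm : 1 ≤ m) (hiso : IsIsoDeg (A : Set (Site d)) φ m) :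
    ∀ u ∈ A, ∀ v ∈ A, φ u = φ v → u = v := by
  intro u hu v hv heq
  have hlt : dist1 (φ u) (φ v) < m := by
    rw [heq, dist1_self]
    exact lt_of_lt_of_le zero_lt_one hm
  have hsd := hiso u hu v hv (Or.inr hlt)
  rcases hsd with ⟨h1, h2, h3⟩ | ⟨h1, h2⟩
  · have hz : u.2 - v.2 = 0 := by rw [← h3, heq, sub_self]
    exact Prod.ext h2 (sub_eq_zero.mp hz)
  · exact absurd (congrArg Prod.fst heq) h1

lemma memS_le_one {f : Site d → ℝ} (hf : memS f) (u : Site d) : f u ≤ 1 :=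
  le_trans (Summable.le_tsum hf.2.1 u fun v _ => hf.1 v) hf.2.2

lemma memS_sq_summable {f : Site d → ℝ} (hf : memS f) : Summable fun u => (f u) ^ 2 := by
  refine hf.2.1.of_nonneg_of_le (fun u => sq_nonneg _) fun u => ?_
  have h1 := hf.1 u
  have h2 := memS_le_one hf u
  nlinarith

lemma twoPowNeg_min_le (m₁ m₂ : ENat) :
    twoPowNeg (min m₁ m₂) ≤ twoPowNeg m₁ + twoPowNeg m₂ := by
  rcases min_cases m₁ m₂ with ⟨hmin, -⟩ | ⟨hmin, -⟩ <;> rw [hmin] <;>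
    linarith [twoPowNeg_nonneg m₁, twoPowNeg_nonneg m₂]

lemma tsum_notMem_eq (A : Finset (Site d)) (F : Site d → ℝ) :
    (∑' u : {u : Site d // u ∉ A}, F u.1) = ∑' u, Set.indicator {u | u ∉ A} F u :=
  tsum_subtype _ _

lemma finsetSum_eq_tsum_indicator (E : Finset (Site d)) (F : Site d → ℝ) :
    ∑ y ∈ E, F y = ∑' u, Set.indicator (E : Set (Site d)) F u :=
  (Finset.tsum_subtype E F).symm.trans (tsum_subtype _ F)

lemma finsetSum_le_tsum_notMem {F : Site d → ℝ} (hF : Summable F) (h0 : ∀ u, 0 ≤ F u)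
    (E B : Finset (Site d)) (hEB : ∀ y ∈ E, y ∉ B) :
    ∑ y ∈ E, F y ≤ ∑' u : {u : Site d // u ∉ B}, F u.1 := by
  rw [tsum_notMem_eq, finsetSum_eq_tsum_indicator]
  refine Summable.tsum_le_tsum (fun u => ?_) (hF.indicator _) (hF.indicator _)
  exact Set.indicator_le_indicator_of_subset
    (fun y hy => hEB y (Finset.mem_coe.mp hy)) h0 u

lemma tsum_notMem_le_split {F : Site d → ℝ} (hF : Summable F) (h0 : ∀ u, 0 ≤ F u)
    (C A : Finset (Site d)) :
    (∑' u : {u : Site d // u ∉ C}, F u.1)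
      ≤ (∑' u : {u : Site d // u ∉ A}, F u.1) + ∑ u ∈ A \ C, F u := by
  rw [tsum_notMem_eq, tsum_notMem_eq, finsetSum_eq_tsum_indicator,
    ← Summable.tsum_add (hF.indicator _) (hF.indicator _)]
  refine Summable.tsum_le_tsum (fun u => ?_) (hF.indicator _) ((hF.indicator _).add (hF.indicator _))
  have hn1 : 0 ≤ Set.indicator {u : Site d | u ∉ A} F u :=
    Set.indicator_nonneg (fun v _ => h0 v) u
  have hn2 : 0 ≤ Set.indicator ((A \ C : Finset (Site d)) : Set (Site d)) F u :=
    Set.indicator_nonneg (fun v _ => h0 v) u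
  by_cases hCu : u ∈ C
  · rw [Set.indicator_of_notMem (by simpa using hCu)]
    linarith
  · rw [Set.indicator_of_mem (show u ∈ {u : Site d | u ∉ C} from hCu)]
    by_cases hAu : u ∈ A
    · have hmem : u ∈ ((A \ C : Finset (Site d)) : Set (Site d)) := by
        simp [hAu, hCu]
      rw [Set.indicator_of_mem hmem]
      linarith
    · rw [Set.indicator_of_mem (show u ∈ {u : Site d | u ∉ A} from hAu)]
      linarith

lemma pdist_set_nonempty (f g : Site d → ℝ) :
    { r : ℝ | ∃ (A : Finset (Site d)) (φ : Site d → Site d) (m : ENat),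
      1 ≤ m ∧ IsIsoDeg (A : Set (Site d)) φ m ∧ r = dPhi A φ m f g }.Nonempty :=
  ⟨dPhi ∅ id 1 f g, ∅, id, 1, le_refl _, by intro u hu; simp at hu, rfl⟩

lemma pdist_set_bddBelow (f g : Site d → ℝ) :
    BddBelow { r : ℝ | ∃ (A : Finset (Site d)) (φ : Site d → Site d) (m : ENat),
      1 ≤ m ∧ IsIsoDeg (A : Set (Site d)) φ m ∧ r = dPhi A φ m f g } := by
  refine ⟨0, ?_⟩
  rintro r ⟨A, φ, m, -, -, rfl⟩
  exact dPhi_nonneg A φ m f g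

lemma sq_le_helper {a b : ℝ} (ha0 : 0 ≤ a) (ha1 : a ≤ 1) (hb0 : 0 ≤ b) (hb1 : b ≤ 1) :
    a ^ 2 ≤ 2 * |a - b| + b ^ 2 := by
  have h1 := le_abs_self (a - b)
  have h2 := abs_nonneg (a - b)
  nlinarith

lemma exists_symm (f g : Site d → ℝ) {A : Finset (Site d)} {φ : Site d → Site d} {m : ENat}
    (hm : 1 ≤ m) (hiso : IsIsoDeg (A : Set (Site d)) φ m) :
    ∃ (B : Finset (Site d)) (ψ : Site d → Site d),
      IsIsoDeg (B : Set (Site d)) ψ m ∧ dPhi B ψ m g f = dPhi A φ m f g := by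
  classical
  have hinj := iso_inj hm hiso
  set ψ : Site d → Site d :=
    fun y => if hy : ∃ u, u ∈ A ∧ φ u = y then hy.choose else y with hψ
  have hspec : ∀ y, (hy : ∃ u, u ∈ A ∧ φ u = y) → ψ y ∈ A ∧ φ (ψ y) = y := by
    intro y hy
    simp only [hψ, dif_pos hy]
    exact hy.choose_spec
  have hleft : ∀ u ∈ A, ψ (φ u) = u := by
    intro u hu
    obtain ⟨h1, h2⟩ := hspec (φ u) ⟨u, hu, rfl⟩
    exact hinj _ h1 _ hu h2
  refine ⟨A.image φ, ψ, ?_, ?_⟩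
  · intro y₁ hy₁ y₂ hy₂ hcond
    rw [Finset.coe_image] at hy₁ hy₂
    obtain ⟨u₁, hu₁, rfl⟩ := hy₁
    obtain ⟨u₂, hu₂, rfl⟩ := hy₂
    rw [hleft _ hu₁, hleft _ hu₂] at hcond ⊢
    exact sameDiff_swap (hiso _ hu₁ _ hu₂ hcond.symm)
  · have himg : (A.image φ).image ψ = A := by
      ext v
      simp only [Finset.mem_image]
      constructor
      · rintro ⟨y, hy, rfl⟩
        obtain ⟨u, hu, rfl⟩ := hy
        rw [hleft _ hu]
        exact hu
      · intro hv
        exact ⟨φ v, ⟨v, hv, rfl⟩, hleft _ hv⟩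
    have hsum : ∑ y ∈ A.image φ, |g y - f (ψ y)| = ∑ u ∈ A, |f u - g (φ u)| := by
      rw [Finset.sum_image (fun x hx y hy => hinj x hx y hy)]
      exact Finset.sum_congr rfl fun u hu => by rw [hleft _ hu, abs_sub_comm]
    unfold dPhi
    rw [himg, hsum]
    ring

lemma exists_triangle {f g h : Site d → ℝ} (hf : memS f) (hg : memS g) (hh : memS h)
    {A B : Finset (Site d)} {φ ψ : Site d → Site d} {m₁ m₂ : ENat}
    (hm₁ : 1 ≤ m₁) (hm₂ : 1 ≤ m₂)
    (hiso₁ : IsIsoDeg (A : Set (Site d)) φ m₁) (hiso₂ : IsIsoDeg (B : Set (Site d)) ψ m₂) :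
    ∃ (C : Finset (Site d)) (χ : Site d → Site d) (m : ENat), 1 ≤ m ∧
      IsIsoDeg (C : Set (Site d)) χ m ∧
      dPhi C χ m f h ≤ dPhi A φ m₁ f g + dPhi B ψ m₂ g h := by
  classical
  have hinj₁ := iso_inj hm₁ hiso₁
  have hinj₂ := iso_inj hm₂ hiso₂
  set C : Finset (Site d) := A.filter (fun u => φ u ∈ B) with hCdef
  have hCA : C ⊆ A := Finset.filter_subset _ _
  have hCB : ∀ u ∈ C, φ u ∈ B := fun u hu => (Finset.mem_filter.mp hu).2
  refine ⟨C, ψ ∘ φ, min m₁ m₂, le_min hm₁ hm₂, ?_, ?_⟩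
  · intro u hu v hv hcond
    simp only [Function.comp_apply] at hcond ⊢
    have hu' : u ∈ C := hu
    have hv' : v ∈ C := hv
    have huA : u ∈ A := hCA hu'
    have hvA : v ∈ A := hCA hv'
    have huB : φ u ∈ B := hCB u hu'
    have hvB : φ v ∈ B := hCB v hv'
    rcases hcond with hlt | hlt
    · have h1 : sameDiff (φ u) (φ v) u v :=
        hiso₁ u huA v hvA (Or.inl (lt_of_lt_of_le hlt (min_le_left _ _)))
      have h2 : dist1 (φ u) (φ v) < m₂ := by
        rw [dist1_congr h1]
        exact lt_of_lt_of_le hlt (min_le_right _ _)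
      exact sameDiff_trans (hiso₂ _ huB _ hvB (Or.inl h2)) h1
    · have h2 : sameDiff (ψ (φ u)) (ψ (φ v)) (φ u) (φ v) :=
        hiso₂ _ huB _ hvB (Or.inr (lt_of_lt_of_le hlt (min_le_right _ _)))
      have h1 : dist1 (φ u) (φ v) < m₁ := by
        rw [← dist1_congr h2]
        exact lt_of_lt_of_le hlt (min_le_left _ _)
      exact sameDiff_trans h2 (hiso₁ u huA v hvA (Or.inr h1))
  · -- the quantitative estimate
    set D : Finset (Site d) := C.image φ with hDdef
    have hDB : D ⊆ B := by
      intro y hy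
      obtain ⟨u, hu, rfl⟩ := Finset.mem_image.mp hy
      exact hCB u hu
    -- main sum bound
    have hmain : ∑ u ∈ C, |f u - h ((ψ ∘ φ) u)|
        ≤ (∑ u ∈ C, |f u - g (φ u)|) + ∑ y ∈ D, |g y - h (ψ y)| := by
      have hT1 : ∑ y ∈ D, |g y - h (ψ y)| = ∑ u ∈ C, |g (φ u) - h (ψ (φ u))| :=
        Finset.sum_image (fun x hx y hy => hinj₁ x (hCA hx) y (hCA hy))
      rw [hT1, ← Finset.sum_add_distrib]
      exact Finset.sum_le_sum fun u _ => abs_sub_le _ _ _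
    -- split budgets over A and B
    have hsplitA : (∑ u ∈ A \ C, |f u - g (φ u)|) + ∑ u ∈ C, |f u - g (φ u)|
        = ∑ u ∈ A, |f u - g (φ u)| := Finset.sum_sdiff hCA
    have hsplitB : (∑ y ∈ B \ D, |g y - h (ψ y)|) + ∑ y ∈ D, |g y - h (ψ y)|
        = ∑ y ∈ B, |g y - h (ψ y)| := Finset.sum_sdiff hDB
    -- f-tail bound
    have hftail : (∑' u : {u : Site d // u ∉ C}, (f u.1) ^ 2)
        ≤ (∑' u : {u : Site d // u ∉ A}, (f u.1) ^ 2)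
          + (2 * ∑ u ∈ A \ C, |f u - g (φ u)|)
          + (∑' u : {u : Site d // u ∉ B}, (g u.1) ^ 2) := by
      have h1 := tsum_notMem_le_split (memS_sq_summable hf) (fun u => sq_nonneg _) C A
      have h2 : ∑ u ∈ A \ C, (f u) ^ 2
          ≤ ∑ u ∈ A \ C, (2 * |f u - g (φ u)| + (g (φ u)) ^ 2) := by
        refine Finset.sum_le_sum fun u _ => ?_
        exact sq_le_helper (hf.1 u) (memS_le_one hf u) (hg.1 (φ u)) (memS_le_one hg (φ u))
      have h3 : ∑ u ∈ A \ C, (g (φ u)) ^ 2 = ∑ y ∈ (A \ C).image φ, (g y) ^ 2 := by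
        rw [Finset.sum_image (fun x hx y hy =>
          hinj₁ x (Finset.mem_sdiff.mp hx).1 y (Finset.mem_sdiff.mp hy).1)]
      have h4 : ∑ y ∈ (A \ C).image φ, (g y) ^ 2
          ≤ ∑' u : {u : Site d // u ∉ B}, (g u.1) ^ 2 := by
        refine finsetSum_le_tsum_notMem (memS_sq_summable hg) (fun u => sq_nonneg _) _ _ ?_
        intro y hy
        obtain ⟨u, hu, rfl⟩ := Finset.mem_image.mp hy
        obtain ⟨huA, huC⟩ := Finset.mem_sdiff.mp hu
        intro hyB
        exact huC (Finset.mem_filter.mpr ⟨huA, hyB⟩)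
      rw [Finset.sum_add_distrib, ← Finset.mul_sum] at h2
      linarith
    -- h-tail bound
    have hhtail : (∑' u : {u : Site d // u ∉ C.image (ψ ∘ φ)}, (h u.1) ^ 2)
        ≤ (∑' u : {u : Site d // u ∉ B.image ψ}, (h u.1) ^ 2)
          + (2 * ∑ y ∈ B \ D, |g y - h (ψ y)|)
          + (∑' u : {u : Site d // u ∉ A.image φ}, (g u.1) ^ 2) := by
      have h1 := tsum_notMem_le_split (memS_sq_summable hh) (fun u => sq_nonneg _)
        (C.image (ψ ∘ φ)) (B.image ψ)
      have hsub : (B.image ψ) \ (C.image (ψ ∘ φ)) ⊆ (B \ D).image ψ := by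
        intro w hw
        obtain ⟨hw1, hw2⟩ := Finset.mem_sdiff.mp hw
        obtain ⟨y, hy, rfl⟩ := Finset.mem_image.mp hw1
        refine Finset.mem_image.mpr ⟨y, Finset.mem_sdiff.mpr ⟨hy, ?_⟩, rfl⟩
        intro hyD
        obtain ⟨u, hu, rfl⟩ := Finset.mem_image.mp hyD
        exact hw2 (Finset.mem_image.mpr ⟨u, hu, rfl⟩)
      have h2 : ∑ w ∈ (B.image ψ) \ (C.image (ψ ∘ φ)), (h w) ^ 2
          ≤ ∑ w ∈ (B \ D).image ψ, (h w) ^ 2 :=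
        Finset.sum_le_sum_of_subset_of_nonneg hsub (fun w _ _ => sq_nonneg _)
      have h3 : ∑ w ∈ (B \ D).image ψ, (h w) ^ 2 = ∑ y ∈ B \ D, (h (ψ y)) ^ 2 := by
        rw [Finset.sum_image (fun x hx y hy =>
          hinj₂ x (Finset.mem_sdiff.mp hx).1 y (Finset.mem_sdiff.mp hy).1)]
      have h4 : ∑ y ∈ B \ D, (h (ψ y)) ^ 2
          ≤ ∑ y ∈ B \ D, (2 * |g y - h (ψ y)| + (g y) ^ 2) := by
        refine Finset.sum_le_sum fun y _ => ?_
        have := sq_le_helper (hh.1 (ψ y)) (memS_le_one hh (ψ y)) (hg.1 y) (memS_le_one hg y)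
        calc (h (ψ y)) ^ 2 ≤ 2 * |h (ψ y) - g y| + (g y) ^ 2 := this
          _ = 2 * |g y - h (ψ y)| + (g y) ^ 2 := by rw [abs_sub_comm]
      have h5 : ∑ y ∈ B \ D, (g y) ^ 2
          ≤ ∑' u : {u : Site d // u ∉ A.image φ}, (g u.1) ^ 2 := by
        refine finsetSum_le_tsum_notMem (memS_sq_summable hg) (fun u => sq_nonneg _) _ _ ?_
        intro y hy
        obtain ⟨hyB, hyD⟩ := Finset.mem_sdiff.mp hy
        intro hyA
        obtain ⟨u, hu, rfl⟩ := Finset.mem_image.mp hyA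
        refine hyD (Finset.mem_image.mpr ⟨u, ?_, rfl⟩)
        exact Finset.mem_filter.mpr ⟨hu, hyB⟩
      rw [Finset.sum_add_distrib, ← Finset.mul_sum] at h4
      linarith
    have htp := twoPowNeg_min_le m₁ m₂
    unfold dPhi
    linarith

end Aux

/-- The triangle inequality and symmetry for `d`, making it a
pseudometric on `S`. -/
theorem pdist_triangle_and_symm {d : ℕ} (hd : 1 ≤ d)
    (f g h : Site d → ℝ) (hf : memS f) (hg : memS g) (hh : memS h) :
    pdist f h ≤ pdist f g + pdist g h ∧ pdist f g = pdist g f := by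
  classical
  constructor
  · refine le_of_forall_pos_le_add fun ε hε => ?_
    obtain ⟨a, ha, hlt₁⟩ := Real.lt_sInf_add_pos (pdist_set_nonempty f g) (half_pos hε)
    obtain ⟨b, hb, hlt₂⟩ := Real.lt_sInf_add_pos (pdist_set_nonempty g h) (half_pos hε)
    obtain ⟨A, φ, m₁, hm₁, hiso₁, rfl⟩ := ha
    obtain ⟨B, ψ, m₂, hm₂, hiso₂, rfl⟩ := hb
    obtain ⟨C, χ, m, hm, hiso, hle⟩ := exists_triangle hf hg hh hm₁ hm₂ hiso₁ hiso₂
    have h1 : pdist f h ≤ dPhi C χ m f h :=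
      csInf_le (pdist_set_bddBelow f h) ⟨C, χ, m, hm, hiso, rfl⟩
    have hlt₁' : dPhi A φ m₁ f g < pdist f g + ε / 2 := hlt₁
    have hlt₂' : dPhi B ψ m₂ g h < pdist g h + ε / 2 := hlt₂
    linarith
  · unfold pdist
    congr 1
    ext r
    constructor
    · rintro ⟨A, φ, m, hm, hiso, rfl⟩
      obtain ⟨B, ψ, hiso', heq⟩ := exists_symm f g hm hiso
      exact ⟨B, ψ, m, hm, hiso', heq.symm⟩
    · rintro ⟨A, φ, m, hm, hiso, rfl⟩
      obtain ⟨B, ψ, hiso', heq⟩ := exists_symm g f hm hiso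
      exact ⟨B, ψ, m, hm, hiso', heq.symm⟩

end DirectedPolymers
end

section
/- The map f ↦ ‖f‖ := ∑_{u∈ℕ×ℤ^d} f(u) is lower semicontinuous on (S, d): for every f ∈ S and every ε > 0 there exists δ > 0 such that every g ∈ S with d(f,g) < δ satisfies ‖g‖ > ‖f‖ − ε. -/
open Filter MeasureTheory
open scoped BigOperators Topology ENNReal Classical

namespace DirectedPolymers

/-- The total-mass functional `f ↦ ‖f‖ = ∑_u f(u)` is lower semicontinuous
on `(S, d)`. -/
theorem norm_lsc {d : ℕ} (hd : 1 ≤ d) (f : Site d → ℝ) (hf : memS f)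
    (ε : ℝ) (hε : 0 < ε) :
    ∃ δ > (0 : ℝ), ∀ g : Site d → ℝ, memS g → pdist f g < δ →
      (∑' u, f u) - ε < ∑' u, g u := by
  obtain ⟨hf0, hfs, hf1⟩ := hf
  -- choose a finite set capturing most of the mass of f
  obtain ⟨F, hF⟩ : ∃ F : Finset (Site d), (∑' u, f u) - ε/2 < ∑ u ∈ F, f u := by
    have h := hfs.hasSum.eventually (eventually_gt_nhds (show (∑' u, f u) - ε/2 < ∑' u, f u by
      linarith))
    exact h.exists
  -- lower bound for positive values of f on F
  obtain ⟨c, hc, hcle⟩ : ∃ c : ℝ, 0 < c ∧ ∀ u ∈ F, 0 < f u → c ≤ f u := by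
    by_cases hne : (F.filter fun u => 0 < f u).Nonempty
    · refine ⟨(F.filter fun u => 0 < f u).inf' hne f, ?_, ?_⟩
      · rw [Finset.lt_inf'_iff]
        intro u hu; exact (Finset.mem_filter.mp hu).2
      · intro u hu hpos; exact Finset.inf'_le f (Finset.mem_filter.mpr ⟨hu, hpos⟩)
    · exact ⟨1, one_pos, fun u hu hpos => (hne ⟨u, Finset.mem_filter.mpr ⟨hu, hpos⟩⟩).elim⟩
  have hfle1 : ∀ u, f u ≤ 1 := fun u =>
    le_trans (Summable.le_tsum hfs u fun _ _ => hf0 _) hf1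
  refine ⟨min (ε/2) (c^2), by positivity, ?_⟩
  intro g hg hlt
  obtain ⟨hg0, hgs, _⟩ := hg
  -- extract a witness from the infimum
  set Sset := { r : ℝ | ∃ (A : Finset (Site d)) (φ : Site d → Site d) (m : ENat),
    1 ≤ m ∧ IsIsoDeg (A : Set (Site d)) φ m ∧ r = dPhi A φ m f g } with hSset
  have hne : Sset.Nonempty := by
    refine ⟨dPhi ∅ id ⊤ f g, ∅, id, ⊤, le_top, ?_, rfl⟩
    intro u hu; simp at hu
  obtain ⟨r, ⟨A, φ, m, hm, hiso, hr⟩, hrδ⟩ := exists_lt_of_csInf_lt hne hlt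
  rw [hr] at hrδ
  -- nonnegativity of the pieces of dPhi
  have hS1 : (0:ℝ) ≤ ∑ u ∈ A, |f u - g (φ u)| := Finset.sum_nonneg fun _ _ => abs_nonneg _
  have hT1 : (0:ℝ) ≤ ∑' u : {u : Site d // u ∉ A}, (f u.1) ^ 2 :=
    tsum_nonneg fun _ => sq_nonneg _
  have hT2 : (0:ℝ) ≤ ∑' u : {u : Site d // u ∉ A.image φ}, (g u.1) ^ 2 :=
    tsum_nonneg fun _ => sq_nonneg _
  have htp : (0:ℝ) ≤ twoPowNeg m := by
    unfold twoPowNeg; split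
    · exact le_refl 0
    · positivity
  unfold dPhi at hrδ
  have h2S1 : 2 * ∑ u ∈ A, |f u - g (φ u)| < min (ε/2) (c^2) := by linarith
  have hT1lt : (∑' u : {u : Site d // u ∉ A}, (f u.1) ^ 2) < min (ε/2) (c^2) := by linarith
  -- summability of squared tails of f
  have hsq : Summable (fun u : {u : Site d // u ∉ A} => (f u.1) ^ 2) := by
    apply Summable.of_nonneg_of_le (fun u => sq_nonneg _) (fun u => ?_) (hfs.subtype _)
    show (f u.1) ^ 2 ≤ f u.1
    nlinarith [hf0 u.1, hfle1 u.1]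
  -- every point of F with positive mass lies in A
  have key1 : ∀ u ∈ F, 0 < f u → u ∈ A := by
    intro u hu hpos
    by_contra huA
    have h1 : (f u) ^ 2 ≤ ∑' v : {v : Site d // v ∉ A}, (f v.1) ^ 2 :=
      Summable.le_tsum hsq ⟨u, huA⟩ fun _ _ => sq_nonneg _
    have h2 : c ^ 2 ≤ (f u) ^ 2 := pow_le_pow_left₀ hc.le (hcle u hu hpos) 2
    have h3 : min (ε/2) (c^2) ≤ c^2 := min_le_right _ _
    linarith
  -- hence ∑_F f ≤ ∑_A f
  have hFA : ∑ u ∈ F, f u ≤ ∑ u ∈ A, f u := by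
    have heq : ∑ u ∈ F.filter (fun u => u ∈ A), f u = ∑ u ∈ F, f u :=
      Finset.sum_filter_of_ne fun x hx hne => key1 x hx ((hf0 x).lt_of_ne (Ne.symm hne))
    rw [← heq]
    apply Finset.sum_le_sum_of_subset_of_nonneg
    · intro u hu; exact (Finset.mem_filter.mp hu).2
    · intro u _ _; exact hf0 u
  -- φ is injective on A
  have hinj : ∀ u ∈ A, ∀ v ∈ A, φ u = φ v → u = v := by
    intro u hu v hv heq
    have hd0 : dist1 (φ u) (φ v) < m := by
      rw [heq]
      have : dist1 (φ v) (φ v) = 0 := by simp [dist1]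
      rw [this]
      exact lt_of_lt_of_le zero_lt_one hm
    rcases hiso u hu v hv (Or.inr hd0) with ⟨_, h1, h2⟩ | ⟨hne2, _⟩
    · rw [heq, sub_self] at h2
      exact Prod.ext h1 (sub_eq_zero.mp h2.symm)
    · exact absurd (congrArg Prod.fst heq) hne2
  -- sum of g over the image
  have himg : ∑ u ∈ A.image φ, g u = ∑ u ∈ A, g (φ u) :=
    Finset.sum_image hinj
  have hgsum : ∑ u ∈ A.image φ, g u ≤ ∑' u, g u :=
    Summable.sum_le_tsum _ (fun u _ => hg0 u) hgs
  -- compare g∘φ to f on A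
  have hcomp : ∑ u ∈ A, f u - ∑ u ∈ A, g (φ u) ≤ ∑ u ∈ A, |f u - g (φ u)| := by
    rw [← Finset.sum_sub_distrib]
    exact Finset.sum_le_sum fun u _ => le_abs_self _
  have hδε : min (ε/2) (c^2) ≤ ε/2 := min_le_left _ _
  linarith [hF, hFA, hgsum, himg, hcomp, h2S1]

end DirectedPolymers
end

section
/- Fix an integer d ≥ 1 and β > 0. Suppose f : ℕ×ℤ^d → [0,∞) satisfies ∑_{u∈ℕ×ℤ^d} f(u) = 1. Let (Y_u)_{u∈ℕ×ℤ^d} be i.i.d. real random variables with common law λ satisfying 𝐄e^{2βY} < ∞ and 𝐄e^{−2βY} < ∞, where Y has law λ. Define W := log(∑_{u∈ℕ×ℤ^d} ∑_{v∼u} f(v) e^{βY_u}), where v∼u means ‖u−v‖₁ = 1 within the same copy of ℤ^d. Then 𝐄[(W − 𝐄W)⁴] ≤ 32(d^{−2} 𝐄e^{−2βY} + 4d² 𝐄e^{2βY}); in particular 𝐄[(W − 𝐄W)⁴] is bounded by a finite constant depending only on λ, β, and d (not on f). -/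
open Filter MeasureTheory
open scoped BigOperators Topology ENNReal Classical

namespace DirectedPolymers

lemma tsum_eq_toReal_tsum_ofReal {ι : Type*} (h : ι → ℝ) (h0 : ∀ i, 0 ≤ h i) :
    ∑' i, h i = (∑' i, ENNReal.ofReal (h i)).toReal := by
  by_cases hs : Summable h
  · rw [← ENNReal.ofReal_tsum_of_nonneg h0 hs, ENNReal.toReal_ofReal (tsum_nonneg h0)]
  · rw [tsum_eq_zero_of_not_summable hs]
    have htop : ∑' i, ENNReal.ofReal (h i) = ⊤ := by
      by_contra hne
      apply hs
      have h2 := ENNReal.summable_toReal hne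
      have h3 : (fun i => (ENNReal.ofReal (h i)).toReal) = h :=
        funext fun i => ENNReal.toReal_ofReal (h0 i)
      rwa [h3] at h2
    simp [htop]

lemma exists_eq_one_of_sum_eq_one {ι : Type*} (s : Finset ι) (a : ι → ℕ)
    (h : ∑ i ∈ s, a i = 1) : ∃ i ∈ s, a i = 1 ∧ ∀ j ∈ s, j ≠ i → a j = 0 := by
  obtain ⟨i, hi, hne⟩ := Finset.exists_ne_zero_of_sum_ne_zero (by simp [h] : ∑ i ∈ s, a i ≠ 0)
  have h1 : a i ≤ 1 := h ▸ Finset.single_le_sum (fun j _ => Nat.zero_le _) hi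
  have hai : a i = 1 := le_antisymm h1 (Nat.one_le_iff_ne_zero.mpr hne)
  refine ⟨i, hi, hai, fun j hj hji => ?_⟩
  have h2 := Finset.add_sum_erase s a hi
  have hz : ∑ k ∈ s.erase i, a k = 0 := by omega
  exact (Finset.sum_eq_zero_iff.mp hz) j (Finset.mem_erase.mpr ⟨hji, hj⟩)

lemma ennreal_amgm (a b : ℝ≥0∞) : 2 * (a * b) ≤ a ^ 2 + b ^ 2 := by
  have key : ∀ x y : ℝ≥0∞, x ≤ y → 2 * (x * y) ≤ x ^ 2 + y ^ 2 := by
    intro x y hxy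
    obtain ⟨c, rfl⟩ := exists_add_of_le hxy
    calc 2 * (x * (x + c)) ≤ 2 * (x * (x + c)) + c ^ 2 := le_self_add
    _ = x ^ 2 + (x + c) ^ 2 := by ring
  rcases le_total a b with h | h
  · exact key a b h
  · calc 2 * (a * b) = 2 * (b * a) := by ring
    _ ≤ b ^ 2 + a ^ 2 := key b a h
    _ = a ^ 2 + b ^ 2 := by ring

lemma two_le_exp_add_exp_neg (t : ℝ) : 2 ≤ Real.exp t + Real.exp (-t) := by
  have h1 := Real.add_one_le_exp t
  have h2 := Real.add_one_le_exp (-t)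
  linarith

lemma log_sq_mul_exp_sq_le {z : ℝ} (hz : 1 ≤ z) :
    Real.log z ^ 2 * Real.exp 1 ^ 2 ≤ 4 * z := by
  have hz0 : (0:ℝ) < z := lt_of_lt_of_le one_pos hz
  have hs1 : (1:ℝ) ≤ Real.sqrt z := by
    rw [show (1:ℝ) = Real.sqrt 1 by simp]
    exact Real.sqrt_le_sqrt hz
  have hs0 : 0 ≤ Real.log (Real.sqrt z) := Real.log_nonneg hs1
  have hE : (0:ℝ) < Real.exp 1 := Real.exp_pos 1
  have hle : Real.log (Real.sqrt z) * Real.exp 1 ≤ Real.sqrt z := by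
    have h1 : (0:ℝ) < Real.sqrt z / Real.exp 1 := by positivity
    have h2 := Real.log_le_sub_one_of_pos h1
    rw [Real.log_div (by positivity) (Real.exp_ne_zero 1), Real.log_exp] at h2
    have h3 : Real.log (Real.sqrt z) ≤ Real.sqrt z / Real.exp 1 := by linarith
    calc Real.log (Real.sqrt z) * Real.exp 1 ≤ (Real.sqrt z / Real.exp 1) * Real.exp 1 := by
          exact mul_le_mul_of_nonneg_right h3 hE.le
    _ = Real.sqrt z := by field_simp
  have hlog : Real.log z = 2 * Real.log (Real.sqrt z) := by
    rw [Real.log_sqrt hz0.le]; ring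
  have hsq : Real.sqrt z ^ 2 = z := Real.sq_sqrt hz0.le
  rw [hlog]
  nlinarith [mul_self_le_mul_self (mul_nonneg hs0 hE.le) hle]

lemma log_pow4_le {z : ℝ} (hz : 0 ≤ z) :
    Real.log z ^ 4 ≤ z ^ 2 + (z⁻¹) ^ 2 := by
  have key : ∀ w : ℝ, 1 ≤ w → Real.log w ^ 4 ≤ w ^ 2 := by
    intro w hw
    have h1 := log_sq_mul_exp_sq_le hw
    have hE2 : (4:ℝ) ≤ Real.exp 1 ^ 2 := by
      have h2 : (2:ℝ) ≤ Real.exp 1 := by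
        have := Real.add_one_le_exp (1:ℝ); linarith
      nlinarith
    have hL0 : 0 ≤ Real.log w ^ 2 := sq_nonneg _
    have hw0 : (0:ℝ) ≤ w := by linarith
    have hE4 : (16:ℝ) ≤ (Real.exp 1 ^ 2) ^ 2 := by nlinarith
    have hstep := mul_self_le_mul_self (mul_nonneg hL0 (by positivity : (0:ℝ) ≤ Real.exp 1 ^ 2)) h1
    have h16 : 16 * (Real.log w ^ 2) ^ 2 ≤ (Real.log w ^ 2) ^ 2 * (Real.exp 1 ^ 2) ^ 2 := by
      nlinarith [sq_nonneg (Real.log w ^ 2)]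
    nlinarith [hstep, h16]
  rcases eq_or_lt_of_le hz with h0 | h0
  · simp [← h0]
  rcases le_total 1 z with h1 | h1
  · have := key z h1
    have : Real.log z ^ 4 ≤ z ^ 2 := key z h1
    nlinarith [sq_nonneg (z⁻¹)]
  · have hzi : 1 ≤ z⁻¹ := (one_le_inv_iff₀.mpr ⟨h0, h1⟩)
    have h2 := key z⁻¹ hzi
    rw [Real.log_inv] at h2
    have h3 : (-Real.log z) ^ 4 = Real.log z ^ 4 := by ring
    rw [h3] at h2
    nlinarith [sq_nonneg z]

lemma dist1_eq_one_iff {d : ℕ} (v u : Site d) :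
    dist1 v u = 1 ↔ v.1 = u.1 ∧ (∑ i, (v.2 i - u.2 i).natAbs) = 1 := by
  unfold dist1
  by_cases h : v.1 = u.1
  · simp only [h, if_true, true_and]
    exact_mod_cast Nat.cast_inj (R := ℕ∞)
  · simp [h]

lemma neighbor_tsum_one {d : ℕ} (v : Site d) :
    ∑' u : Site d, (if dist1 v u = 1 then (1 : ℝ≥0∞) else 0) = 2 * d := by
  classical
  set nb : Fin d × Bool → Site d := fun p =>
    (v.1, Function.update v.2 p.1 (v.2 p.1 + if p.2 then 1 else -1)) with hnb_def
  have hnb_mem : ∀ p, dist1 v (nb p) = 1 := by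
    intro p
    rw [dist1_eq_one_iff]
    refine ⟨rfl, ?_⟩
    rw [Finset.sum_eq_single_of_mem p.1 (Finset.mem_univ _)]
    · simp only [hnb_def, Function.update_self]
      cases p.2 <;> norm_num
    · intro j _ hj
      simp [hnb_def, Function.update_of_ne hj]
  have hinj : Function.Injective nb := by
    rintro ⟨i, b⟩ ⟨j, c⟩ hpq
    have h2 : Function.update v.2 i (v.2 i + if b then 1 else -1)
        = Function.update v.2 j (v.2 j + if c then 1 else -1) := congrArg Prod.snd hpq
    by_cases hij : i = j
    · subst hij
      have h3 := congrFun h2 i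
      rw [Function.update_self, Function.update_self] at h3
      cases b <;> cases c <;> simp_all <;> omega
    · have h3 := congrFun h2 i
      rw [Function.update_self, Function.update_of_ne hij] at h3
      cases b <;> simp at h3 <;> omega
  have hsurj : ∀ u : Site d, dist1 v u = 1 → ∃ p, nb p = u := by
    intro u hu
    rw [dist1_eq_one_iff] at hu
    obtain ⟨h1, h2⟩ := hu
    obtain ⟨i, -, hi1, hi0⟩ := exists_eq_one_of_sum_eq_one Finset.univ _ h2
    have hji : ∀ j, j ≠ i → u.2 j = v.2 j := by
      intro j hj
      have h3 := hi0 j (Finset.mem_univ j) hj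
      have h4 := Int.natAbs_eq_zero.mp h3
      omega
    rcases Int.natAbs_eq_iff.mp hi1 with hcase | hcase
    · refine ⟨(i, false), ?_⟩
      refine Prod.ext h1 (funext fun j => ?_)
      by_cases hj : j = i
      · subst hj
        rw [show (nb (j, false)).2 = Function.update v.2 j (v.2 j + -1) from by
          simp [hnb_def]]
        rw [Function.update_self]
        omega
      · show Function.update v.2 i _ j = u.2 j
        rw [Function.update_of_ne hj]
        exact (hji j hj).symm
    · refine ⟨(i, true), ?_⟩
      refine Prod.ext h1 (funext fun j => ?_)
      by_cases hj : j = i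
      · subst hj
        rw [show (nb (j, true)).2 = Function.update v.2 j (v.2 j + 1) from by
          simp [hnb_def]]
        rw [Function.update_self]
        omega
      · show Function.update v.2 i _ j = u.2 j
        rw [Function.update_of_ne hj]
        exact (hji j hj).symm
  let e : (Fin d × Bool) ≃ {u : Site d // dist1 v u = 1} :=
    Equiv.ofBijective (fun p => ⟨nb p, hnb_mem p⟩)
      ⟨fun p q h => hinj (congrArg Subtype.val h),
       fun ⟨u, hu⟩ => (hsurj u hu).imp fun p hp => Subtype.ext hp⟩
  have h1 : ∀ u : Site d, (if dist1 v u = 1 then (1:ℝ≥0∞) else 0)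
      = Set.indicator {u : Site d | dist1 v u = 1} (fun _ => (1:ℝ≥0∞)) u := by
    intro u
    simp only [Set.indicator_apply, Set.mem_setOf_eq]
  calc ∑' u : Site d, (if dist1 v u = 1 then (1 : ℝ≥0∞) else 0)
      = ∑' u : Site d, Set.indicator {u : Site d | dist1 v u = 1} (fun _ => (1:ℝ≥0∞)) u := by
        simp only [h1]
  _ = ∑' u : {u : Site d // dist1 v u = 1}, (1:ℝ≥0∞) :=
        (tsum_subtype {u : Site d | dist1 v u = 1} (fun _ => (1:ℝ≥0∞))).symm
  _ = ∑' _ : Fin d × Bool, (1:ℝ≥0∞) := (Equiv.tsum_eq e (fun _ => (1:ℝ≥0∞))).symm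
  _ = 2 * d := by
        rw [tsum_fintype]
        simp [Finset.card_univ, mul_comm]


open ProbabilityTheory

/-- `W = log(∑_u ∑_{v∼u} f(v) e^{βY_u})` for an environment `Y` evaluated at `ω`. -/
noncomputable def Wlog (d : ℕ) (β : ℝ) {Ω : Type*} (Y : Site d → Ω → ℝ)
    (f : Site d → ℝ) (ω : Ω) : ℝ :=
  Real.log (∑' u : Site d,
    (∑' v : {v : Site d // dist1 v u = 1}, f v.1) * Real.exp (β * Y u ω))

set_option maxHeartbeats 1000000

/-- For `f` a probability mass function on `ℕ × ℤ^d` and an i.i.d.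
environment with law `λ` having finite exponential moments of order `±2β`, the centered
fourth moment of `W` is bounded by `32(d⁻² 𝐄e^{-2βY} + 4d² 𝐄e^{2βY})`, a constant
depending only on `λ`, `β` and `d` (not on `f`). -/
theorem fourth_moment_bound {d : ℕ} (hd : 1 ≤ d) (β : ℝ) (hβ : 0 < β)
    (lam : Measure ℝ) [IsProbabilityMeasure lam]
    (h2 : Integrable (fun x => Real.exp (2 * β * x)) lam)
    (hm2 : Integrable (fun x => Real.exp (-(2 * β) * x)) lam)
    {Ω : Type*} [MeasurableSpace Ω] (μ : Measure Ω) [IsProbabilityMeasure μ]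
    (Y : Site d → Ω → ℝ) (hYm : ∀ u, Measurable (Y u))
    (hYlaw : ∀ u, μ.map (Y u) = lam)
    (hYind : iIndepFun Y μ)
    (f : Site d → ℝ) (hf0 : ∀ u, 0 ≤ f u) (hfs : Summable f)
    (hf1 : (∑' u, f u) = 1) :
    (∫ ω, (Wlog d β Y f ω - ∫ ω', Wlog d β Y f ω' ∂μ) ^ 4 ∂μ)
      ≤ 32 * (((d : ℝ) ^ 2)⁻¹ * (∫ x, Real.exp (-(2 * β) * x) ∂lam)
          + 4 * (d : ℝ) ^ 2 * ∫ x, Real.exp (2 * β * x) ∂lam) := by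
  classical
  set A : ℝ := ∫ x, Real.exp (-(2 * β) * x) ∂lam with hA_def
  set B : ℝ := ∫ x, Real.exp (2 * β * x) ∂lam with hB_def
  have hA0 : 0 ≤ A := integral_nonneg fun x => (Real.exp_pos _).le
  have hB0 : 0 ≤ B := integral_nonneg fun x => (Real.exp_pos _).le
  have hd1 : (1:ℝ) ≤ (d:ℝ) := by exact_mod_cast hd
  -- ENNReal setup
  set S : ℝ≥0∞ := 2 * (d : ℝ≥0∞) with hS_def
  have hd0 : d ≠ 0 := by omega
  have hS0 : S ≠ 0 := by
    simp only [hS_def, ne_eq, mul_eq_zero, not_or]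
    exact ⟨two_ne_zero, Nat.cast_ne_zero.mpr hd0⟩
  have hStop : S ≠ ⊤ := by
    simp only [hS_def]
    exact ENNReal.mul_ne_top ENNReal.ofNat_ne_top (ENNReal.natCast_ne_top d)
  have hS20 : S ^ 2 ≠ 0 := pow_ne_zero _ hS0
  have hS2top : S ^ 2 ≠ ⊤ := ENNReal.pow_ne_top hStop
  set g : Site d → ℝ := fun u => ∑' v : {v : Site d // dist1 v u = 1}, f v.1 with hg_def
  have hg0 : ∀ u, 0 ≤ g u := fun u => tsum_nonneg fun v => hf0 v.1
  set G : Site d → ℝ≥0∞ := fun u => ENNReal.ofReal (g u) with hG_def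
  have hGsum : ∑' u, G u = S := by
    have h1 : ∀ u, G u = ∑' v : {v : Site d // dist1 v u = 1}, ENNReal.ofReal (f v.1) :=
      fun u => ENNReal.ofReal_tsum_of_nonneg (fun v => hf0 v.1) (hfs.subtype _)
    calc ∑' u, G u
        = ∑' u, ∑' v : {v : Site d // dist1 v u = 1}, ENNReal.ofReal (f v.1) := by
          simp only [h1]
    _ = ∑' u, ∑' w : Site d, (if dist1 w u = 1 then ENNReal.ofReal (f w) else 0) := by
          congr 1; funext u
          have ht := tsum_subtype {v : Site d | dist1 v u = 1} (fun w => ENNReal.ofReal (f w))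
          exact ht.trans (tsum_congr fun w => by
            simp only [Set.indicator_apply, Set.mem_setOf_eq])
    _ = ∑' w : Site d, ∑' u : Site d, (if dist1 w u = 1 then ENNReal.ofReal (f w) else 0) :=
          ENNReal.tsum_comm
    _ = ∑' w : Site d, ENNReal.ofReal (f w) * ∑' u : Site d, (if dist1 w u = 1 then (1:ℝ≥0∞) else 0) := by
          congr 1; funext w
          rw [← ENNReal.tsum_mul_left]
          congr 1; funext u
          by_cases h : dist1 w u = 1 <;> simp [h]
    _ = ∑' w : Site d, ENNReal.ofReal (f w) * (2 * d) := by
          congr 1; funext w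
          rw [neighbor_tsum_one]
    _ = (∑' w : Site d, ENNReal.ofReal (f w)) * (2 * d) := ENNReal.tsum_mul_right
    _ = S := by
          rw [← ENNReal.ofReal_tsum_of_nonneg hf0 hfs, hf1]
          simp [hS_def]
  set ε : Site d → Ω → ℝ≥0∞ := fun u ω => ENNReal.ofReal (Real.exp (β * Y u ω)) with hε_def
  set ε' : Site d → Ω → ℝ≥0∞ := fun u ω => ENNReal.ofReal (Real.exp (-(β * Y u ω))) with hε'_def
  have hεm : ∀ u, Measurable (ε u) :=
    fun u => (Real.measurable_exp.comp ((hYm u).const_mul β)).ennreal_ofReal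
  have hε'm : ∀ u, Measurable (ε' u) :=
    fun u => (Real.measurable_exp.comp ((hYm u).const_mul β).neg).ennreal_ofReal
  set Z : Ω → ℝ≥0∞ := fun ω => ∑' u, G u * ε u ω with hZ_def
  set Z' : Ω → ℝ≥0∞ := fun ω => ∑' u, G u * ε' u ω with hZ'_def
  have hZfun : ∀ ω, Z ω = ∑' u, G u * ε u ω := fun ω => rfl
  have hZ'fun : ∀ ω, Z' ω = ∑' u, G u * ε' u ω := fun ω => rfl
  have hZm : Measurable Z := Measurable.ennreal_tsum fun u => (hεm u).const_mul (G u)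
  have hZ'm : Measurable Z' := Measurable.ennreal_tsum fun u => (hε'm u).const_mul (G u)
  have hWeq : ∀ ω, Wlog d β Y f ω = Real.log ((Z ω).toReal) := by
    intro ω
    unfold Wlog
    congr 1
    rw [tsum_eq_toReal_tsum_ofReal (fun u => g u * Real.exp (β * Y u ω))
      (fun u => mul_nonneg (hg0 u) (Real.exp_pos _).le)]
    congr 1
    exact tsum_congr fun u => ENNReal.ofReal_mul (hg0 u)
  have hWm : Measurable (Wlog d β Y f) := by
    have h : Wlog d β Y f = fun ω => Real.log ((Z ω).toReal) := funext hWeq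
    rw [h]
    exact Real.measurable_log.comp hZm.ennreal_toReal
  -- moments
  have momB : ∀ u, ∫⁻ ω, (ε u ω) ^ 2 ∂μ = ENNReal.ofReal B := by
    intro u
    have h1 : ∀ ω, (ε u ω) ^ 2 = ENNReal.ofReal (Real.exp (2 * β * Y u ω)) := by
      intro ω
      simp only [hε_def]
      rw [← ENNReal.ofReal_pow (Real.exp_pos _).le]
      congr 1
      rw [← Real.exp_nat_mul]
      norm_num
      ring_nf
    simp only [h1]
    have hgm : Measurable (fun x : ℝ => ENNReal.ofReal (Real.exp (2 * β * x))) :=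
      (Real.measurable_exp.comp (measurable_id.const_mul _)).ennreal_ofReal
    calc ∫⁻ ω, ENNReal.ofReal (Real.exp (2 * β * Y u ω)) ∂μ
        = ∫⁻ x, ENNReal.ofReal (Real.exp (2 * β * x)) ∂(μ.map (Y u)) :=
          (lintegral_map hgm (hYm u)).symm
    _ = ∫⁻ x, ENNReal.ofReal (Real.exp (2 * β * x)) ∂lam := by rw [hYlaw u]
    _ = ENNReal.ofReal B := by
          rw [hB_def]
          exact (MeasureTheory.ofReal_integral_eq_lintegral_ofReal h2
            (ae_of_all _ fun x => (Real.exp_pos _).le)).symm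
  have momA : ∀ u, ∫⁻ ω, (ε' u ω) ^ 2 ∂μ = ENNReal.ofReal A := by
    intro u
    have h1 : ∀ ω, (ε' u ω) ^ 2 = ENNReal.ofReal (Real.exp (-(2 * β) * Y u ω)) := by
      intro ω
      simp only [hε'_def]
      rw [← ENNReal.ofReal_pow (Real.exp_pos _).le]
      congr 1
      rw [← Real.exp_nat_mul]
      norm_num
      ring_nf
    simp only [h1]
    have hgm : Measurable (fun x : ℝ => ENNReal.ofReal (Real.exp (-(2 * β) * x))) :=
      (Real.measurable_exp.comp (measurable_id.const_mul _)).ennreal_ofReal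
    calc ∫⁻ ω, ENNReal.ofReal (Real.exp (-(2 * β) * Y u ω)) ∂μ
        = ∫⁻ x, ENNReal.ofReal (Real.exp (-(2 * β) * x)) ∂(μ.map (Y u)) :=
          (lintegral_map hgm (hYm u)).symm
    _ = ∫⁻ x, ENNReal.ofReal (Real.exp (-(2 * β) * x)) ∂lam := by rw [hYlaw u]
    _ = ENNReal.ofReal A := by
          rw [hA_def]
          exact (MeasureTheory.ofReal_integral_eq_lintegral_ofReal hm2
            (ae_of_all _ fun x => (Real.exp_pos _).le)).symm
  -- generic second moment bound
  have asm : ∀ (a b : Site d → ℝ≥0∞), ∑' u, ∑' v, a u * b v = (∑' u, a u) * (∑' v, b v) := by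
    intro a b
    rw [← ENNReal.tsum_mul_right]
    congr 1; funext u
    rw [ENNReal.tsum_mul_left]
  have main2 : ∀ (e : Site d → Ω → ℝ≥0∞), (∀ u, Measurable (e u)) →
      ∀ C : ℝ≥0∞, (∀ u, ∫⁻ ω, (e u ω) ^ 2 ∂μ = C) →
      ∫⁻ ω, (∑' u, G u * e u ω) ^ 2 ∂μ ≤ S ^ 2 * C := by
    intro e hem C hC
    have hpt : ∀ ω, (∑' u, G u * e u ω) ^ 2
        = ∑' u, ∑' v, (G u * e u ω) * (G v * e v ω) := by
      intro ω
      rw [pow_two, asm]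
    have hprodm : ∀ u v, Measurable (fun ω => (G u * e u ω) * (G v * e v ω)) :=
      fun u v => ((hem u).const_mul (G u)).mul ((hem v).const_mul (G v))
    calc ∫⁻ ω, (∑' u, G u * e u ω) ^ 2 ∂μ
        = ∫⁻ ω, ∑' u, ∑' v, (G u * e u ω) * (G v * e v ω) ∂μ := lintegral_congr hpt
    _ = ∑' u, ∑' v, ∫⁻ ω, (G u * e u ω) * (G v * e v ω) ∂μ := by
          rw [lintegral_tsum (fun u =>
            (Measurable.ennreal_tsum fun v => hprodm u v).aemeasurable)]
          congr 1; funext u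
          rw [lintegral_tsum (fun v => (hprodm u v).aemeasurable)]
    _ ≤ ∑' u, ∑' v, (G u * G v) * C := by
          refine ENNReal.tsum_le_tsum fun u => ENNReal.tsum_le_tsum fun v => ?_
          have h1 : ∀ ω : Ω, (G u * e u ω) * (G v * e v ω)
              = (G u * G v) * (e u ω * e v ω) := fun ω => by ring
          have hevm : Measurable (fun ω => e u ω * e v ω) := (hem u).mul (hem v)
          calc ∫⁻ ω, (G u * e u ω) * (G v * e v ω) ∂μ
              = (G u * G v) * ∫⁻ ω, e u ω * e v ω ∂μ := by
                simp only [h1]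
                exact lintegral_const_mul _ hevm
          _ ≤ (G u * G v) * C := by
                refine mul_le_mul_right ?_ _
                have h2 : 2 * ∫⁻ ω, e u ω * e v ω ∂μ ≤ 2 * C := by
                  rw [← lintegral_const_mul 2 hevm]
                  calc ∫⁻ ω, 2 * (e u ω * e v ω) ∂μ
                      ≤ ∫⁻ ω, (e u ω) ^ 2 + (e v ω) ^ 2 ∂μ :=
                        lintegral_mono fun ω => ennreal_amgm _ _
                  _ = C + C := by
                        rw [lintegral_add_left ((hem u).pow_const 2), hC u, hC v]
                  _ = 2 * C := (two_mul C).symm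
                exact (ENNReal.mul_le_mul_iff_right two_ne_zero ENNReal.ofNat_ne_top).mp h2
    _ = S ^ 2 * C := by
          have h3 : ∀ (x y : Site d), (G x * G y) * C = G x * (G y * C) :=
            fun x y => by ring
          simp only [h3]
          calc ∑' u, ∑' v, G u * (G v * C)
              = ∑' u, G u * ∑' v, (G v * C) := by
                congr 1; funext u
                rw [ENNReal.tsum_mul_left]
          _ = (∑' u, G u) * ((∑' v, G v) * C) := by
                rw [ENNReal.tsum_mul_right, ENNReal.tsum_mul_right]
          _ = S ^ 2 * C := by rw [hGsum]; ring
  have hL2 : ∫⁻ ω, (Z ω) ^ 2 ∂μ ≤ S ^ 2 * ENNReal.ofReal B := by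
    simp only [hZfun]
    exact main2 ε hεm _ momB
  have hL2' : ∫⁻ ω, (Z' ω) ^ 2 ∂μ ≤ S ^ 2 * ENNReal.ofReal A := by
    simp only [hZ'fun]
    exact main2 ε' hε'm _ momA
  -- lower bound on Z * Z'
  have hcross : ∀ (u v : Site d) (ω : Ω),
      (2:ℝ≥0∞) ≤ ε u ω * ε' v ω + ε v ω * ε' u ω := by
    intro u v ω
    have h1 : ε u ω * ε' v ω = ENNReal.ofReal (Real.exp (β * Y u ω - β * Y v ω)) := by
      simp only [hε_def, hε'_def]
      rw [← ENNReal.ofReal_mul (Real.exp_pos _).le, ← Real.exp_add]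
      ring_nf
    have h2 : ε v ω * ε' u ω = ENNReal.ofReal (Real.exp (-(β * Y u ω - β * Y v ω))) := by
      simp only [hε_def, hε'_def]
      rw [← ENNReal.ofReal_mul (Real.exp_pos _).le, ← Real.exp_add]
      ring_nf
    rw [h1, h2, ← ENNReal.ofReal_add (Real.exp_pos _).le (Real.exp_pos _).le]
    calc (2:ℝ≥0∞) = ENNReal.ofReal 2 := by norm_num
    _ ≤ _ := ENNReal.ofReal_le_ofReal (two_le_exp_add_exp_neg _)
  have hlow : ∀ ω, S ^ 2 ≤ Z ω * Z' ω := by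
    intro ω
    have hdouble : 2 * S ^ 2 ≤ 2 * (Z ω * Z' ω) := by
      have e1 : S ^ 2 = ∑' u, ∑' v : Site d, G u * G v := by
        rw [asm, hGsum, pow_two]
      calc 2 * S ^ 2 = ∑' u, ∑' v : Site d, 2 * (G u * G v) := by
            rw [e1, ← ENNReal.tsum_mul_left]
            exact tsum_congr fun u => (ENNReal.tsum_mul_left).symm
      _ ≤ ∑' u, ∑' v : Site d, (G u * G v) * (ε u ω * ε' v ω + ε v ω * ε' u ω) := by
            refine ENNReal.tsum_le_tsum fun u => ENNReal.tsum_le_tsum fun v => ?_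
            rw [mul_comm (2:ℝ≥0∞) _]
            exact mul_le_mul_right (hcross u v ω) _
      _ = (∑' u, ∑' v : Site d, (G u * ε u ω) * (G v * ε' v ω))
            + ∑' u, ∑' v : Site d, (G u * ε' u ω) * (G v * ε v ω) := by
            rw [← ENNReal.tsum_add]
            congr 1; funext u
            rw [← ENNReal.tsum_add]
            congr 1; funext v
            ring
      _ = Z ω * Z' ω + Z' ω * Z ω := by
            rw [asm, asm]
      _ = 2 * (Z ω * Z' ω) := by ring
    exact (ENNReal.mul_le_mul_iff_right two_ne_zero ENNReal.ofNat_ne_top).mp hdouble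
  have hZinv : ∀ ω, ((Z ω)⁻¹) ^ 2 ≤ ((S ^ 2)⁻¹) ^ 2 * (Z' ω) ^ 2 := by
    intro ω
    have h1 : (Z ω)⁻¹ ≤ (S ^ 2)⁻¹ * Z' ω := by
      by_cases htop : Z' ω = ⊤
      · rw [htop, ENNReal.mul_top (ENNReal.inv_ne_zero.mpr hS2top)]
        exact le_top
      · have hz0 : Z' ω ≠ 0 := by
          intro h0
          have h3 := hlow ω
          rw [h0, mul_zero, le_zero_iff] at h3
          exact hS20 h3
        have hge : S ^ 2 * (Z' ω)⁻¹ ≤ Z ω := by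
          calc S ^ 2 * (Z' ω)⁻¹ ≤ (Z ω * Z' ω) * (Z' ω)⁻¹ := mul_le_mul_left (hlow ω) _
          _ = Z ω * (Z' ω * (Z' ω)⁻¹) := by ring
          _ = Z ω := by rw [ENNReal.mul_inv_cancel hz0 htop, mul_one]
        calc (Z ω)⁻¹ ≤ (S ^ 2 * (Z' ω)⁻¹)⁻¹ := ENNReal.inv_le_inv' hge
        _ = (S ^ 2)⁻¹ * Z' ω := by
            rw [ENNReal.mul_inv (Or.inl hS20) (Or.inl hS2top), inv_inv]
    calc ((Z ω)⁻¹) ^ 2 ≤ ((S ^ 2)⁻¹ * Z' ω) ^ 2 := by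
          rw [pow_two, pow_two]
          exact mul_le_mul' h1 h1
    _ = ((S ^ 2)⁻¹) ^ 2 * (Z' ω) ^ 2 := mul_pow _ _ 2
  -- key lintegral bound
  have hKey : ∫⁻ ω, ENNReal.ofReal ((Wlog d β Y f ω) ^ 4) ∂μ
      ≤ S ^ 2 * ENNReal.ofReal B + (S ^ 2)⁻¹ * ENNReal.ofReal A := by
    have hpt : ∀ ω, ENNReal.ofReal ((Wlog d β Y f ω) ^ 4)
        ≤ (Z ω) ^ 2 + ((Z ω)⁻¹) ^ 2 := by
      intro ω
      rw [hWeq ω]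
      have h4 := log_pow4_le (ENNReal.toReal_nonneg : 0 ≤ (Z ω).toReal)
      calc ENNReal.ofReal (Real.log ((Z ω).toReal) ^ 4)
          ≤ ENNReal.ofReal ((Z ω).toReal ^ 2 + ((Z ω).toReal⁻¹) ^ 2) :=
            ENNReal.ofReal_le_ofReal h4
      _ ≤ ENNReal.ofReal ((Z ω).toReal ^ 2) + ENNReal.ofReal (((Z ω).toReal⁻¹) ^ 2) :=
            ENNReal.ofReal_add_le
      _ ≤ (Z ω) ^ 2 + ((Z ω)⁻¹) ^ 2 := by
            gcongr
            · by_cases h : Z ω = ⊤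
              · simp [h]
              · rw [ENNReal.ofReal_pow ENNReal.toReal_nonneg, ENNReal.ofReal_toReal h]
            · by_cases hz : Z ω = 0
              · simp [hz]
              · rw [← ENNReal.toReal_inv, ENNReal.ofReal_pow ENNReal.toReal_nonneg,
                  ENNReal.ofReal_toReal (ENNReal.inv_ne_top.mpr hz)]
    calc ∫⁻ ω, ENNReal.ofReal ((Wlog d β Y f ω) ^ 4) ∂μ
        ≤ ∫⁻ ω, (Z ω) ^ 2 + ((Z ω)⁻¹) ^ 2 ∂μ := lintegral_mono hpt
    _ = ∫⁻ ω, (Z ω) ^ 2 ∂μ + ∫⁻ ω, ((Z ω)⁻¹) ^ 2 ∂μ :=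
          lintegral_add_left (hZm.pow_const 2) _
    _ ≤ S ^ 2 * ENNReal.ofReal B + (S ^ 2)⁻¹ * ENNReal.ofReal A := by
          refine add_le_add hL2 ?_
          calc ∫⁻ ω, ((Z ω)⁻¹) ^ 2 ∂μ
              ≤ ∫⁻ ω, ((S ^ 2)⁻¹) ^ 2 * (Z' ω) ^ 2 ∂μ := lintegral_mono hZinv
          _ = ((S ^ 2)⁻¹) ^ 2 * ∫⁻ ω, (Z' ω) ^ 2 ∂μ :=
                lintegral_const_mul _ (hZ'm.pow_const 2)
          _ ≤ ((S ^ 2)⁻¹) ^ 2 * (S ^ 2 * ENNReal.ofReal A) := mul_le_mul_right hL2' _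
          _ = (S ^ 2)⁻¹ * ENNReal.ofReal A := by
                rw [pow_two, mul_assoc, ← mul_assoc (S ^ 2)⁻¹ (S ^ 2),
                  ENNReal.inv_mul_cancel hS20 hS2top, one_mul]
  -- pass to real integrals
  set K : ℝ := (2 * (d:ℝ)) ^ 2 * B + ((2 * (d:ℝ)) ^ 2)⁻¹ * A with hK_def
  have hd2pos : (0:ℝ) < (2 * (d:ℝ)) ^ 2 := by positivity
  have hK0 : 0 ≤ K := by
    have : (0:ℝ) ≤ ((2 * (d:ℝ)) ^ 2)⁻¹ := by positivity
    exact add_nonneg (mul_nonneg hd2pos.le hB0) (mul_nonneg this hA0)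
  have hcast : S ^ 2 * ENNReal.ofReal B + (S ^ 2)⁻¹ * ENNReal.ofReal A
      = ENNReal.ofReal K := by
    have hS2 : S ^ 2 = ENNReal.ofReal ((2 * (d:ℝ)) ^ 2) := by
      rw [ENNReal.ofReal_pow (by positivity)]
      congr 1
      rw [ENNReal.ofReal_mul (by norm_num : (0:ℝ) ≤ 2)]
      simp [hS_def, ENNReal.ofReal_natCast]
    rw [hK_def, ENNReal.ofReal_add (mul_nonneg hd2pos.le hB0)
      (mul_nonneg (by positivity) hA0), ENNReal.ofReal_mul hd2pos.le,
      ENNReal.ofReal_mul (by positivity), ENNReal.ofReal_inv_of_pos hd2pos, ← hS2]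
  have hKey2 : ∫⁻ ω, ENNReal.ofReal ((Wlog d β Y f ω) ^ 4) ∂μ ≤ ENNReal.ofReal K := by
    rw [← hcast]; exact hKey
  have hW4int : Integrable (fun ω => (Wlog d β Y f ω) ^ 4) μ := by
    constructor
    · exact (hWm.pow_const 4).aestronglyMeasurable
    · rw [hasFiniteIntegral_iff_ofReal (ae_of_all _ fun ω => by rw [show (Wlog d β Y f ω) ^ 4 = ((Wlog d β Y f ω) ^ 2) ^ 2 by ring]; positivity)]
      exact lt_of_le_of_lt hKey2 ENNReal.ofReal_lt_top
  have hQ : ∫ ω, (Wlog d β Y f ω) ^ 4 ∂μ ≤ K := by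
    rw [integral_eq_lintegral_of_nonneg_ae (ae_of_all _ fun ω => by rw [show (Wlog d β Y f ω) ^ 4 = ((Wlog d β Y f ω) ^ 2) ^ 2 by ring]; positivity)
      (hWm.pow_const 4).aestronglyMeasurable]
    calc (∫⁻ ω, ENNReal.ofReal ((Wlog d β Y f ω) ^ 4) ∂μ).toReal
        ≤ (ENNReal.ofReal K).toReal :=
          ENNReal.toReal_mono ENNReal.ofReal_ne_top hKey2
    _ = K := ENNReal.toReal_ofReal hK0
  have hWint : Integrable (Wlog d β Y f) μ := by
    refine Integrable.mono' (hW4int.add (integrable_const 1))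
      hWm.aestronglyMeasurable (ae_of_all _ fun ω => ?_)
    rw [Real.norm_eq_abs]
    simp only [Pi.add_apply]
    rcases abs_cases (Wlog d β Y f ω) with ⟨h1, h2⟩ | ⟨h1, h2⟩ <;> rw [h1] <;>
      nlinarith [sq_nonneg ((Wlog d β Y f ω) ^ 2 - 1), sq_nonneg (Wlog d β Y f ω - 1),
        sq_nonneg (Wlog d β Y f ω + 1), sq_nonneg (Wlog d β Y f ω),
        sq_nonneg ((Wlog d β Y f ω) ^ 2)]
  set m : ℝ := ∫ ω', Wlog d β Y f ω' ∂μ with hm_def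
  have hJensen : m ^ 4 ≤ ∫ ω, (Wlog d β Y f ω) ^ 4 ∂μ := by
    have hconv : ConvexOn ℝ Set.univ (fun x : ℝ => x ^ 4) :=
      Even.convexOn_pow (by decide)
    have := hconv.map_integral_le ((continuous_pow 4).continuousOn) isClosed_univ
      (ae_of_all _ fun ω => Set.mem_univ _) hWint (by exact hW4int)
    simpa using this
  have hpt4 : ∀ ω, (Wlog d β Y f ω - m) ^ 4 ≤ 8 * (Wlog d β Y f ω) ^ 4 + 8 * m ^ 4 := by
    intro ω
    set w := Wlog d β Y f ω
    nlinarith [sq_nonneg (w + m), sq_nonneg (w - m), sq_nonneg (w ^ 2 - m ^ 2),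
      sq_nonneg (w ^ 2 + m ^ 2), sq_nonneg ((w - m) ^ 2), sq_nonneg (w * m)]
  have hRHSint : Integrable (fun ω => 8 * (Wlog d β Y f ω) ^ 4 + 8 * m ^ 4) μ :=
    (hW4int.const_mul 8).add (integrable_const _)
  have hint4 : Integrable (fun ω => (Wlog d β Y f ω - m) ^ 4) μ := by
    refine Integrable.mono' hRHSint
      (((hWm.sub measurable_const).pow_const 4).aestronglyMeasurable)
      (ae_of_all _ fun ω => ?_)
    rw [Real.norm_eq_abs, abs_of_nonneg (by
      rw [show (Wlog d β Y f ω - m) ^ 4 = ((Wlog d β Y f ω - m) ^ 2) ^ 2 by ring]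
      positivity)]
    exact hpt4 ω
  calc ∫ ω, (Wlog d β Y f ω - m) ^ 4 ∂μ
      ≤ ∫ ω, (8 * (Wlog d β Y f ω) ^ 4 + 8 * m ^ 4) ∂μ :=
        integral_mono hint4 hRHSint hpt4
  _ = 8 * ∫ ω, (Wlog d β Y f ω) ^ 4 ∂μ + 8 * m ^ 4 := by
        rw [integral_add (hW4int.const_mul 8) (integrable_const _),
          integral_const_mul, integral_const]
        simp [measure_univ]
  _ ≤ 16 * K := by
        have h1 := hQ
        have h2 := hJensen
        linarith
  _ ≤ 32 * (((d:ℝ) ^ 2)⁻¹ * A + 4 * (d:ℝ) ^ 2 * B) := by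
        have hx : (0:ℝ) < (d:ℝ) ^ 2 := by positivity
        have hrw : ((2 * (d:ℝ)) ^ 2)⁻¹ = 4⁻¹ * ((d:ℝ) ^ 2)⁻¹ := by
          rw [show (2 * (d:ℝ)) ^ 2 = 4 * (d:ℝ) ^ 2 by ring, mul_inv]
        rw [hK_def, hrw]
        have hxa : 0 ≤ ((d:ℝ) ^ 2)⁻¹ * A := mul_nonneg (by positivity) hA0
        have hxb : 0 ≤ (d:ℝ) ^ 2 * B := mul_nonneg (by positivity) hB0
        nlinarith [hxa, hxb]



end DirectedPolymers
end
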